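/- arXiv:1601.02099 — 8 statements merged into one kernel-verified Lean document; each statement's English description precedes it below -/
import Mathlib

section
/- For every graph G and threshold function φ with φ(u) ≤ d_G(u) for all u, the minimum size h_φ(G) of a φ-dynamic monopoly satisfies h_φ(G) ≤ ∑_{u ∈ V(G)} φ(u)/(d_G(u)+1). -/
open scoped Classical

variable {V : Type*} [Fintype V]

/-- A set `S` is closed for `(G, φ)`: every vertex outside `S` has fewer than
`φ u` neighbors inside `S`. -/
def IsClosedSet (G : SimpleGraph V) (φ : V → ℕ) (S : Finset V) : Prop :=
  ∀ u ∉ S, (S.filter (fun w => G.Adj u w)).card < φ u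

/-- The closure `H(D)`: the intersection of all closed supersets of `D`. -/
noncomputable def Hcl (G : SimpleGraph V) (φ : V → ℕ) (D : Finset V) : Finset V :=
  Finset.univ.filter (fun v => ∀ S : Finset V, D ⊆ S → IsClosedSet G φ S → v ∈ S)

/-!
Order the vertices by a bijection `σ : V ≃ Fin |V|` and let `D_σ` be the set of vertices `u` with
fewer than `φ u` neighbours later in the order. A closed set containing `D_σ` but missing a vertex
fails at the latest missing vertex `u`: all of its at least `φ u` later neighbours lie in the set.
Precomposing `σ` with the transposition of `u` and a neighbour `v` exchanges their ranks, so the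
rank of `u` in its closed neighbourhood takes each of its `deg u + 1` values equally often; hence
`u ∈ D_σ` for the fraction `φ u / (deg u + 1)` of all orders, and some `D_σ` is at most the
average size.
-/

open Finset

section Ranking

variable {α β : Type*} [LinearOrder β]

noncomputable def aboveCount (S : Finset α) (f : α → β) (a : α) : ℕ :=
  #{b ∈ S | f a < f b}

variable {S : Finset α} {f : α → β}

lemma aboveCount_lt_card {a : α} (ha : a ∈ S) : aboveCount S f a < #S :=
  card_lt_card <| filter_ssubset.2 ⟨a, ha, lt_irrefl _⟩

lemma aboveCount_lt_aboveCount {a a' : α} (ha' : a' ∈ S) (h : f a < f a') :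
    aboveCount S f a' < aboveCount S f a := by
  refine card_lt_card ⟨monotone_filter_right _ fun b _ hb => h.trans hb, fun hsub => ?_⟩
  exact lt_irrefl _ (mem_filter.1 (hsub (mem_filter.2 ⟨ha', h⟩))).2

lemma injOn_aboveCount (hf : Set.InjOn f S) : Set.InjOn (aboveCount S f) S := by
  intro a ha a' ha' heq
  refine hf ha ha' (le_antisymm ?_ ?_) <;> refine not_lt.1 fun hlt => ?_
  · exact (aboveCount_lt_aboveCount ha hlt).ne heq
  · exact (aboveCount_lt_aboveCount ha' hlt).ne heq.symm

lemma image_aboveCount (hf : Set.InjOn f S) : S.image (aboveCount S f) = range #S := by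
  refine eq_of_subset_of_card_le (fun n hn => ?_) ?_
  · obtain ⟨a, ha, rfl⟩ := mem_image.1 hn
    exact mem_range.2 (aboveCount_lt_card ha)
  · rw [card_range, card_image_of_injOn (injOn_aboveCount hf)]

lemma card_filter_aboveCount_lt (hf : Set.InjOn f S) (k : ℕ) :
    #{a ∈ S | aboveCount S f a < k} = min k #S := by
  have hinj := (injOn_aboveCount hf).mono (coe_subset.2 (filter_subset (aboveCount S f · < k) S))
  rw [← card_image_of_injOn hinj, ← filter_image (p := (· < k)), image_aboveCount hf]
  have : (range #S).filter (· < k) = range (min k #S) := by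
    ext n; simp only [mem_filter, mem_range]; omega
  rw [this, card_range]

lemma aboveCount_comp_perm (π : Equiv.Perm α) (hπ : ∀ a, π a ∈ S ↔ a ∈ S) (a : α) :
    aboveCount S (f ∘ π) a = aboveCount S f (π a) :=
  card_equiv π fun b => by simp [hπ]

end Ranking

section Orders

variable {α β : Type*} [Fintype α] [Fintype β] [LinearOrder β] {S : Finset α}

lemma card_aboveCount_lt_eq {u v : α} (hu : u ∈ S) (hv : v ∈ S) (k : ℕ) :
    #{σ : α ≃ β | aboveCount S σ u < k} = #{σ : α ≃ β | aboveCount S σ v < k} := by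
  have hswap : ∀ a, Equiv.swap u v a ∈ S ↔ a ∈ S := fun a => by
    rw [Equiv.swap_apply_def]; split_ifs <;> simp_all
  refine card_equiv (Equiv.equivCongr (Equiv.swap u v) (Equiv.refl β)) fun σ => ?_
  have hσ : ⇑(Equiv.equivCongr (Equiv.swap u v) (Equiv.refl β) σ) = σ ∘ Equiv.swap u v := by
    ext a; simp [Equiv.equivCongr_apply_apply]
  simp only [mem_filter, mem_univ, true_and, hσ, aboveCount_comp_perm _ hswap,
    Equiv.swap_apply_right]

lemma card_mul_card_aboveCount_lt {u : α} (hu : u ∈ S) (k : ℕ) :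
    #S * #{σ : α ≃ β | aboveCount S σ u < k} = min k #S * Fintype.card (α ≃ β) := by
  calc #S * #{σ : α ≃ β | aboveCount S σ u < k}
      = ∑ v ∈ S, #{σ : α ≃ β | aboveCount S σ v < k} := by
        rw [sum_congr rfl fun v hv => (card_aboveCount_lt_eq hu hv k).symm, sum_const,
          smul_eq_mul]
    _ = ∑ σ : α ≃ β, #{v ∈ S | aboveCount S σ v < k} := by
        simp only [card_filter]; exact sum_comm
    _ = ∑ _σ : α ≃ β, min k #S :=
        sum_congr rfl fun σ _ => card_filter_aboveCount_lt σ.injective.injOn k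
    _ = min k #S * Fintype.card (α ≃ β) := by
        rw [sum_const, card_univ, smul_eq_mul, mul_comm]

end Orders

section Monopoly

variable {β : Type*} [LinearOrder β] (G : SimpleGraph V) (φ : V → ℕ)

noncomputable def orderMonopoly (r : V → β) : Finset V :=
  {u | aboveCount (insert u (G.neighborFinset u)) r u < φ u}

lemma Hcl_orderMonopoly (r : V → β) : Hcl G φ (orderMonopoly G φ r) = univ := by
  refine eq_univ_of_forall fun v => mem_filter.2 ⟨mem_univ v, fun S hD hS => ?_⟩
  by_contra hvS
  obtain ⟨u, huS, hmax⟩ := exists_max_image {w | w ∉ S} r ⟨v, by simpa using hvS⟩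
  rw [mem_filter] at huS
  have hle : φ u ≤ aboveCount (insert u (G.neighborFinset u)) r u := by
    simpa [orderMonopoly] using fun hu => huS.2 (hD (mem_filter.2 ⟨mem_univ u, hu⟩))
  have hsub : {w ∈ insert u (G.neighborFinset u) | r u < r w} ⊆ {w ∈ S | G.Adj u w} := by
    intro w hw
    obtain ⟨hwN, hlt⟩ := mem_filter.1 hw
    have hwS : w ∈ S := by_contra fun hwS => (hmax w (by simpa using hwS)).not_gt hlt
    have hwu : w ≠ u := by rintro rfl; exact lt_irrefl _ hlt
    exact mem_filter.2 ⟨hwS, by simpa [hwu] using hwN⟩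
  exact (hle.trans (card_le_card hsub)).not_gt (hS u huS.2)

variable [Fintype β]

lemma sum_card_orderMonopoly (hφ : ∀ u, φ u ≤ G.degree u) :
    ∑ σ : V ≃ β, (#(orderMonopoly G φ σ) : ℝ) =
      Fintype.card (V ≃ β) * ∑ u, (φ u : ℝ) / (G.degree u + 1) := by
  have hcount : ∀ u, (G.degree u + 1) * #{σ : V ≃ β | u ∈ orderMonopoly G φ σ} =
      φ u * Fintype.card (V ≃ β) := fun u => by
    have hcard : #(insert u (G.neighborFinset u)) = G.degree u + 1 := by
      rw [card_insert_of_notMem (G.notMem_neighborFinset_self u), G.card_neighborFinset_eq_degree]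
    have := card_mul_card_aboveCount_lt (β := β) (mem_insert_self u (G.neighborFinset u)) (φ u)
    rw [hcard, min_eq_left (by have := hφ u; omega)] at this
    simpa [orderMonopoly] using this
  have hdouble : ∑ σ : V ≃ β, #(orderMonopoly G φ σ) =
      ∑ u, #{σ : V ≃ β | u ∈ orderMonopoly G φ σ} := by
    simp only [card_filter]
    rw [sum_comm]
    simp only [sum_boole, Nat.cast_id, filter_mem_eq_inter, univ_inter]
  rw [← Nat.cast_sum, hdouble, Nat.cast_sum, mul_sum]
  refine sum_congr rfl fun u _ => ?_
  rw [← mul_div_assoc, eq_div_iff (by positivity)]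
  exact_mod_cast (mul_comm _ _).trans ((hcount u).trans (mul_comm _ _))

end Monopoly

theorem stmt5 (G : SimpleGraph V) (φ : V → ℕ) (hφ : ∀ u, φ u ≤ G.degree u) :
    ∃ D : Finset V, Hcl G φ D = Finset.univ ∧
      (D.card : ℝ) ≤ ∑ u : V, (φ u : ℝ) / ((G.degree u : ℝ) + 1) := by
  have : Nonempty (V ≃ Fin (Fintype.card V)) := ⟨Fintype.equivFin V⟩
  have hsum : ∑ σ : V ≃ Fin (Fintype.card V), (#(orderMonopoly G φ σ) : ℝ) ≤
      ∑ _σ : V ≃ Fin (Fintype.card V), ∑ u, (φ u : ℝ) / (G.degree u + 1) := by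
    rw [sum_card_orderMonopoly G φ hφ, sum_const, card_univ, nsmul_eq_mul]
  obtain ⟨σ, -, hσ⟩ := exists_le_of_sum_le univ_nonempty hsum
  exact ⟨orderMonopoly G φ σ, Hcl_orderMonopoly G φ σ, hσ⟩
end

section
/- If ρ ∈ (0,1] and T is a tree of order at least 1/ρ, then T has a φ_ρ-dynamic monopoly of size at most ρ·n(T), where φ_ρ(u) = ⌈ρ·d_T(u)⌉. -/
open scoped Classical

variable {V : Type*} [Fintype V]

open Finset SimpleGraph

lemma hcl_univ_of {G : SimpleGraph V} {φ : V → ℕ} {D : Finset V}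
    (h : ∀ S : Finset V, D ⊆ S → IsClosedSet G φ S → S = Finset.univ) :
    Hcl G φ D = Finset.univ := by
  apply Finset.eq_univ_of_forall
  intro v
  simp only [Hcl, Finset.mem_filter, Finset.mem_univ, true_and]
  intro S hDS hS
  rw [h S hDS hS]
  exact Finset.mem_univ v

lemma closed_eq_univ_of_hcl {G : SimpleGraph V} {φ : V → ℕ} {D : Finset V}
    (h : Hcl G φ D = Finset.univ) {S : Finset V} (hDS : D ⊆ S) (hS : IsClosedSet G φ S) :
    S = Finset.univ := by
  apply Finset.eq_univ_of_forall
  intro v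
  have hv : v ∈ Hcl G φ D := h ▸ Finset.mem_univ v
  simp only [Hcl, Finset.mem_filter] at hv
  exact hv.2 S hDS hS

lemma walk_spread {G : SimpleGraph V} {φ : V → ℕ} {S : Finset V}
    (hS : IsClosedSet G φ S) (hφ : ∀ u, u ∉ S → φ u ≤ 1)
    {a b : V} (w : G.Walk a b) (ha : a ∈ S) : b ∈ S := by
  induction w with
  | nil => exact ha
  | @cons a c b h p ih =>
    apply ih
    by_contra hc
    have h1 := hS c hc
    have h2 : a ∈ S.filter (fun w => G.Adj c w) := Finset.mem_filter.2 ⟨ha, h.symm⟩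
    have h3 : 1 ≤ (S.filter (fun w => G.Adj c w)).card := Finset.card_pos.2 ⟨a, h2⟩
    have h4 := hφ c hc
    omega

lemma one_seed {G : SimpleGraph V} (hpc : G.Preconnected) {φ : V → ℕ} {u₀ : V}
    (hφ : ∀ u, u ≠ u₀ → φ u ≤ 1) : Hcl G φ {u₀} = Finset.univ := by
  apply hcl_univ_of
  intro S hDS hS
  apply Finset.eq_univ_of_forall
  intro v
  have hu₀ : u₀ ∈ S := hDS (Finset.mem_singleton_self u₀)
  obtain ⟨w⟩ := hpc u₀ v
  exact walk_spread hS (fun u hu => hφ u (fun h => hu (h ▸ hu₀))) w hu₀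

lemma interior_exists_two {G : SimpleGraph V} :
    ∀ {a b : V} (w : G.Walk a b), w.IsPath → ∀ z ∈ w.support, z ≠ a → z ≠ b →
      ∃ c d, c ≠ d ∧ G.Adj z c ∧ G.Adj z d ∧ c ∈ w.support ∧ d ∈ w.support := by
  intro a b w
  induction w with
  | nil =>
    intro _ z hz hza _
    rw [SimpleGraph.Walk.support_nil, List.mem_singleton] at hz
    exact absurd hz hza
  | @cons a c b h p ih =>
    intro hw z hz hza hzb
    rw [SimpleGraph.Walk.support_cons, List.mem_cons] at hz
    rcases hz with rfl | hz
    · exact absurd rfl hza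
    rw [SimpleGraph.Walk.cons_isPath_iff] at hw
    by_cases hzc : z = c
    · subst hzc
      cases p with
      | nil => exact absurd rfl hzb
      | @cons c d b h2 q =>
        refine ⟨a, d, ?_, h.symm, h2, ?_, ?_⟩
        · rintro rfl
          exact hw.2 (by simp [SimpleGraph.Walk.support_cons])
        · simp [SimpleGraph.Walk.support_cons]
        · simp [SimpleGraph.Walk.support_cons]
    · obtain ⟨c', d', h1, h2, h3, h4, h5⟩ := ih hw.1 z hz hzc hzb
      exact ⟨c', d', h1, h2, h3, by simp [SimpleGraph.Walk.support_cons, Or.inr h4],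
        by simp [SimpleGraph.Walk.support_cons, Or.inr h5]⟩

lemma induce_reachable {G : SimpleGraph V} {s : Set V} :
    ∀ {a b : V} (w : G.Walk a b) (_ : ∀ z ∈ w.support, z ∈ s) (ha : a ∈ s) (hb : b ∈ s),
      (G.induce s).Reachable ⟨a, ha⟩ ⟨b, hb⟩ := by
  intro a b w
  induction w with
  | nil => intro _ ha hb; rfl
  | @cons a c b h p ih =>
    intro hsup ha hb
    have hc : c ∈ s := hsup c (by simp [SimpleGraph.Walk.support_cons,
      Or.inr p.start_mem_support])
    have hadj : (G.induce s).Adj ⟨a, ha⟩ ⟨c, hc⟩ := h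
    exact hadj.reachable.trans (ih (fun z hz => hsup z (by simp [SimpleGraph.Walk.support_cons,
      Or.inr hz])) hc hb)

set_option linter.unusedSectionVars false
set_option maxHeartbeats 1600000

lemma card_filter_subtype (s : Set V) (S : Finset V) (P : V → Prop) :
    (Finset.filter (fun (w : ↥s) => P ↑w) (S.subtype (· ∈ s))).card
      = (S.filter (fun w => w ∈ s ∧ P w)).card := by
  apply Finset.card_bij (fun (w : ↥s) _ => (w : V))
  · intro a ha
    simp only [Finset.mem_filter, Finset.mem_subtype] at ha
    exact Finset.mem_filter.2 ⟨ha.1, a.2, ha.2⟩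
  · intro a₁ _ a₂ _ h
    exact Subtype.ext h
  · intro b hb
    simp only [Finset.mem_filter] at hb
    exact ⟨⟨b, hb.2.1⟩, Finset.mem_filter.2 ⟨Finset.mem_subtype.2 hb.1, hb.2.2⟩, rfl⟩

lemma subtype_univ_eq (s : Set V) :
    (Finset.univ.subtype (· ∈ s)) = (Finset.univ : Finset ↥s) := by
  ext a
  simp [Finset.mem_subtype]

lemma degree_induce (T : SimpleGraph V) (s : Set V) (x : ↥s) :
    (T.induce s).degree x = (Finset.univ.filter (fun w => w ∈ s ∧ T.Adj ↑x w)).card := by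
  classical
  rw [← SimpleGraph.card_neighborFinset_eq_degree, SimpleGraph.neighborFinset_eq_filter,
    ← card_filter_subtype s Finset.univ (fun w => T.Adj ↑x w), subtype_univ_eq]
  congr 1

lemma degree_add_le_card {T : SimpleGraph V} (hT : T.IsTree) {a b : V} (hab : a ≠ b) :
    T.degree a + T.degree b ≤ Fintype.card V := by
  classical
  have hcard := hT.card_edgeFinset
  have h1 : (T.incidenceFinset a).card = T.degree a := by simp
  have h2 : (T.incidenceFinset b).card = T.degree b := by simp
  have hsub : T.incidenceFinset a ∪ T.incidenceFinset b ⊆ T.edgeFinset := by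
    intro e he
    rcases Finset.mem_union.1 he with h | h
    · exact SimpleGraph.mem_edgeFinset.2 (((SimpleGraph.mem_incidenceFinset (G := T) a e).1 h).1)
    · exact SimpleGraph.mem_edgeFinset.2 (((SimpleGraph.mem_incidenceFinset (G := T) b e).1 h).1)
  have hint : (T.incidenceFinset a ∩ T.incidenceFinset b).card ≤ 1 := by
    have : T.incidenceFinset a ∩ T.incidenceFinset b ⊆ {s(a, b)} := by
      intro e he
      rw [Finset.mem_inter] at he
      have := T.incidenceSet_inter_incidenceSet_subset hab
        ⟨(SimpleGraph.mem_incidenceFinset (G := T) a e).1 he.1,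
          (SimpleGraph.mem_incidenceFinset (G := T) b e).1 he.2⟩
      simpa using this
    simpa using Finset.card_le_card this
  have hun : (T.incidenceFinset a ∪ T.incidenceFinset b).card ≤ T.edgeFinset.card :=
    Finset.card_le_card hsub
  have := Finset.card_union_add_card_inter (T.incidenceFinset a) (T.incidenceFinset b)
  omega

lemma exists_pendant {T : SimpleGraph V} (hT : T.IsTree) (h3 : 3 ≤ Fintype.card V) :
    ∃ v p : V, T.Adj v p ∧ 2 ≤ T.degree v ∧
      ∀ w, T.Adj v w → w ≠ p → T.degree w = 1 := by
  classical
  have hconn : T.Connected := hT.isConnected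
  haveI : Nonempty V := hconn.nonempty
  obtain ⟨r⟩ := (inferInstance : Nonempty V)
  -- shortest paths from r
  have spath : ∀ z : V, ∃ q : T.Walk r z, q.IsPath ∧ q.length = T.dist r z := by
    intro z
    obtain ⟨w0, hw0⟩ := hconn.exists_walk_length_eq_dist r z
    refine ⟨w0.bypass, w0.bypass_isPath, le_antisymm ?_ (SimpleGraph.dist_le _)⟩
    calc w0.bypass.length ≤ w0.length := SimpleGraph.Walk.length_bypass_le _
    _ = _ := hw0
  -- adjacent vertices have different distance from r
  have distB : ∀ z w : V, T.Adj z w → T.dist r z ≠ T.dist r w := by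
    intro z w hzw heq
    obtain ⟨Pz, hPz, hPzl⟩ := spath z
    obtain ⟨Pw, hPw, hPwl⟩ := spath w
    have hznot : z ∉ Pw.support := by
      intro hmem
      have hspec := Pw.take_spec hmem
      have hlen : (Pw.takeUntil z hmem).length + (Pw.dropUntil z hmem).length = Pw.length := by
        have := congrArg SimpleGraph.Walk.length hspec
        rwa [SimpleGraph.Walk.length_append] at this
      have h1 : T.dist r z ≤ (Pw.takeUntil z hmem).length := SimpleGraph.dist_le _
      have h2 : (Pw.dropUntil z hmem).length ≠ 0 := fun h0 =>
        hzw.ne (SimpleGraph.Walk.eq_of_length_eq_zero h0)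
      omega
    have hC : (SimpleGraph.Walk.cons hzw Pw.reverse).IsPath := by
      rw [SimpleGraph.Walk.cons_isPath_iff]
      constructor
      · exact hPw.reverse
      · rwa [SimpleGraph.Walk.support_reverse, List.mem_reverse]
    obtain ⟨P0, hP0, huniq⟩ := hT.existsUnique_path r z
    have e1 := huniq _ hPz
    have e2 := huniq _ hC.reverse
    have he : Pz.length = (SimpleGraph.Walk.cons hzw Pw.reverse).reverse.length := by
      rw [e1, e2]
    rw [SimpleGraph.Walk.length_reverse, SimpleGraph.Walk.length_cons,
      SimpleGraph.Walk.length_reverse] at he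
    omega
  -- unique closer neighbor
  have Cuniq : ∀ v z1 z2 : V, T.Adj v z1 → T.Adj v z2 →
      T.dist r z1 < T.dist r v → T.dist r z2 < T.dist r v → z1 = z2 := by
    intro v z1 z2 h1 h2 hd1 hd2
    obtain ⟨P1, hP1, hl1⟩ := spath z1
    obtain ⟨P2, hP2, hl2⟩ := spath z2
    have hnot : ∀ (z : V) (P : T.Walk r z), P.length = T.dist r z →
        T.dist r z < T.dist r v → v ∉ P.support := by
      intro z P hl hd hmem
      have h1' : T.dist r v ≤ (P.takeUntil v hmem).length := SimpleGraph.dist_le _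
      have h2' := SimpleGraph.Walk.length_takeUntil_le P hmem
      omega
    have hC1 : (SimpleGraph.Walk.cons h1 P1.reverse).IsPath := by
      rw [SimpleGraph.Walk.cons_isPath_iff]
      refine ⟨hP1.reverse, ?_⟩
      rw [SimpleGraph.Walk.support_reverse, List.mem_reverse]
      exact hnot z1 P1 hl1 hd1
    have hC2 : (SimpleGraph.Walk.cons h2 P2.reverse).IsPath := by
      rw [SimpleGraph.Walk.cons_isPath_iff]
      refine ⟨hP2.reverse, ?_⟩
      rw [SimpleGraph.Walk.support_reverse, List.mem_reverse]
      exact hnot z2 P2 hl2 hd2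
    have e : (SimpleGraph.Walk.cons h1 P1.reverse) = (SimpleGraph.Walk.cons h2 P2.reverse) := by
      obtain ⟨P0, hP0, huniq⟩ := hT.existsUnique_path v r
      rw [huniq _ hC1, huniq _ hC2]
    have es := congrArg SimpleGraph.Walk.support e
    rw [SimpleGraph.Walk.support_cons, SimpleGraph.Walk.support_cons,
      P1.reverse.support_eq_cons, P2.reverse.support_eq_cons] at es
    simp only [List.cons.injEq] at es
    exact es.2.1
  -- a vertex of degree ≥ 2 exists
  have hNL : ∃ u, 2 ≤ T.degree u := by
    by_contra hno
    push_neg at hno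
    have hsum := T.sum_degrees_eq_twice_card_edges
    have hedge := hT.card_edgeFinset
    have hle : ∑ u, T.degree u ≤ Fintype.card V := by
      calc ∑ u, T.degree u ≤ ∑ _u : V, 1 :=
            Finset.sum_le_sum (fun u _ => by have := hno u; omega)
      _ = Fintype.card V := by simp
    omega
  set NL := Finset.univ.filter (fun u => 2 ≤ T.degree u) with hNLdef
  have hNLne : NL.Nonempty := by
    obtain ⟨u, hu⟩ := hNL
    exact ⟨u, by simp [hNLdef, hu]⟩
  obtain ⟨v, hvNL, hvmax⟩ := Finset.exists_max_image NL (fun u => T.dist r u) hNLne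
  rw [hNLdef, Finset.mem_filter] at hvNL
  have hdv : 2 ≤ T.degree v := hvNL.2
  have hvmax' : ∀ u, 2 ≤ T.degree u → T.dist r u ≤ T.dist r v := fun u hu =>
    hvmax u (by simp [hNLdef, hu])
  have hleaf : ∀ w, T.Adj v w → T.dist r v < T.dist r w → T.degree w = 1 := by
    intro w hw hfar
    have h1 : 0 < T.degree w := (T.degree_pos_iff_exists_adj w).2 ⟨v, hw.symm⟩
    by_contra hne
    have h2 : 2 ≤ T.degree w := by omega
    have := hvmax' w h2
    omega
  by_cases hvr : v = r
  · have hne : ∃ p, T.Adj v p := by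
      have : 0 < T.degree v := by omega
      exact (T.degree_pos_iff_exists_adj v).1 this
    obtain ⟨p, hp⟩ := hne
    refine ⟨v, p, hp, hdv, fun w hw _ => ?_⟩
    apply hleaf w hw
    have h0 : T.dist r v = 0 := by rw [hvr]; simp
    have h1 : T.dist r w ≠ 0 := fun h => (hvr ▸ hw.ne) (hconn.dist_eq_zero_iff.1 h)
    omega
  · have hk : 0 < T.dist r v :=
      Nat.pos_of_ne_zero (fun h => hvr (hconn.dist_eq_zero_iff.1 h).symm)
    obtain ⟨Pv, hPv, hPvl⟩ := spath v
    cases hrev : Pv.reverse with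
    | nil => exact absurd rfl hvr
    | @cons _ p' _ hadj q =>
      have hql : q.length + 1 = T.dist r v := by
        have hlen := congrArg SimpleGraph.Walk.length hrev
        rw [SimpleGraph.Walk.length_reverse, SimpleGraph.Walk.length_cons] at hlen
        omega
      have hdp : T.dist r p' ≤ q.length := by
        have := SimpleGraph.dist_le q.reverse
        rwa [SimpleGraph.Walk.length_reverse] at this
      have hdp' : T.dist r p' < T.dist r v := by omega
      refine ⟨v, p', hadj, hdv, ?_⟩
      intro w hw hwp
      rcases Nat.lt_trichotomy (T.dist r w) (T.dist r v) with hlt | heq | hgt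
      · exact absurd (Cuniq v w p' hw hadj hlt hdp') hwp
      · exact absurd heq.symm (distB v w hw)
      · exact hleaf w hw hgt

lemma induce_isAcyclic {T : SimpleGraph V} (hT : T.IsAcyclic) (s : Set V) :
    (T.induce s).IsAcyclic := by
  intro u c hc
  have hinj : Function.Injective (SimpleGraph.Embedding.induce (G := T) s).toHom :=
    fun a b h => Subtype.ext h
  exact hT (c.map (SimpleGraph.Embedding.induce (G := T) s).toHom)
    ((SimpleGraph.Walk.map_isCycle_iff_of_injective hinj).2 hc)

lemma induce_isTree {T : SimpleGraph V} (hT : T.IsTree) (s : Set V) (p : V) (hp : p ∈ s)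
    (hsup : ∀ a ∈ s, ∃ w : T.Walk a p, ∀ z ∈ w.support, z ∈ s) :
    (T.induce s).IsTree := by
  constructor
  · haveI : Nonempty ↥s := ⟨⟨p, hp⟩⟩
    rw [SimpleGraph.connected_iff]
    refine ⟨?_, inferInstance⟩
    intro a b
    obtain ⟨wa, hwa⟩ := hsup a a.2
    obtain ⟨wb, hwb⟩ := hsup b b.2
    have ra := induce_reachable wa hwa a.2 hp
    have rb := induce_reachable wb hwb b.2 hp
    exact ra.trans rb.symm
  · exact induce_isAcyclic hT.IsAcyclic s

lemma ceil_pred_ge {ρ : ℝ} (hρ0 : 0 < ρ) (hρ1 : ρ ≤ 1) {d : ℕ} (hd : 1 ≤ d) :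
    ⌈ρ * (d : ℝ)⌉₊ ≤ ⌈ρ * ((d : ℝ) - 1)⌉₊ + 1 := by
  have hd1 : (1 : ℝ) ≤ (d : ℝ) := by exact_mod_cast hd
  have h0 : (0:ℝ) ≤ ρ * ((d:ℝ) - 1) := by nlinarith
  have h1 : ρ * (d : ℝ) ≤ ρ * ((d:ℝ) - 1) + 1 := by nlinarith
  calc ⌈ρ * (d : ℝ)⌉₊ ≤ ⌈ρ * ((d:ℝ) - 1) + 1⌉₊ := Nat.ceil_le_ceil h1
  _ = ⌈ρ * ((d:ℝ) - 1)⌉₊ + 1 := Nat.ceil_add_one h0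

universe u

theorem tree_dynmono (ρ : ℝ) (hρ0 : 0 < ρ) (hρ1 : ρ ≤ 1) :
    ∀ (n : ℕ) (V : Type u) [Fintype V] (T : SimpleGraph V), T.IsTree →
      Fintype.card V = n → (1 : ℝ) / ρ ≤ (n : ℝ) →
      ∃ D : Finset V,
        Hcl T (fun u => ⌈ρ * (T.degree u : ℝ)⌉₊) D = Finset.univ ∧
        (D.card : ℝ) ≤ ρ * (n : ℝ) := by
  intro n
  induction n using Nat.strong_induction_on with
  | _ n IH =>
  intro V _ T hT hcard hn
  classical
  have hρn : (1:ℝ) ≤ ρ * (n : ℝ) := by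
    rw [div_le_iff₀ hρ0] at hn
    linarith
  have hnR : (0:ℝ) < (n : ℝ) := by
    have : (0:ℝ) < 1/ρ := by positivity
    linarith
  have hn0 : 0 < n := by exact_mod_cast hnR
  haveI hne : Nonempty V := Fintype.card_pos_iff.mp (by omega)
  have hconn := hT.isConnected
  by_cases h1 : ∃ u₀ : V, ∀ u, u ≠ u₀ → ⌈ρ * (T.degree u : ℝ)⌉₊ ≤ 1
  · obtain ⟨u₀, hu₀⟩ := h1
    refine ⟨{u₀}, one_seed hconn.preconnected hu₀, ?_⟩
    simpa using hρn
  · push_neg at h1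
    obtain ⟨a, haneq, ha2⟩ := h1 (Classical.arbitrary V)
    obtain ⟨b, hbneq, hb2⟩ := h1 a
    have hhard : ∀ c : V, 1 < ⌈ρ * (T.degree c : ℝ)⌉₊ → 1 < ρ * (T.degree c : ℝ) := by
      intro c hc
      have := Nat.lt_ceil.1 hc
      exact_mod_cast this
    have hda : 1 < ρ * (T.degree a : ℝ) := hhard a ha2
    have hdb : 1 < ρ * (T.degree b : ℝ) := hhard b hb2
    have hda2 : 2 ≤ T.degree a := by
      by_contra h
      have h1' : T.degree a ≤ 1 := by omega
      have : (T.degree a : ℝ) ≤ 1 := by exact_mod_cast h1'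
      nlinarith
    have hdb2 : 2 ≤ T.degree b := by
      by_contra h
      have h1' : T.degree b ≤ 1 := by omega
      have : (T.degree b : ℝ) ≤ 1 := by exact_mod_cast h1'
      nlinarith
    have hdsum : T.degree a + T.degree b ≤ n := hcard ▸ Nat.add_comm (T.degree b) (T.degree a) ▸ degree_add_le_card hT hbneq
    have h2ρn : 2 < ρ * (n : ℝ) := by
      have hcast : (T.degree a : ℝ) + (T.degree b : ℝ) ≤ (n : ℝ) := by exact_mod_cast hdsum
      nlinarith
    have h4 : 4 ≤ n := by omega
    by_cases hfree : ∃ x y : V, T.Adj x y ∧ T.degree x = 1 ∧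
        ⌈ρ * ((T.degree y : ℝ) - 1)⌉₊ = ⌈ρ * (T.degree y : ℝ)⌉₊
    · -- remove a "free" leaf x
      obtain ⟨x, y, hxy, hdx, hceq⟩ := hfree
      obtain ⟨s, hsmem⟩ : ∃ s : Set V, ∀ z, z ∈ s ↔ z ≠ x := ⟨{x}ᶜ, fun z => by simp⟩
      have hyx : y ≠ x := hxy.ne'
      have hys : y ∈ s := (hsmem y).2 hyx
      have hNx : T.neighborFinset x = {y} := by
        symm
        apply Finset.eq_of_subset_of_card_le
        · intro z hz
          rw [Finset.mem_singleton] at hz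
          rw [SimpleGraph.mem_neighborFinset, hz]
          exact hxy
        · rw [SimpleGraph.card_neighborFinset_eq_degree, hdx, Finset.card_singleton]
      have honly : ∀ w, T.Adj x w → w = y := by
        intro w hw
        have hmem : w ∈ T.neighborFinset x := by
          rw [SimpleGraph.mem_neighborFinset]
          exact hw
        rw [hNx, Finset.mem_singleton] at hmem
        exact hmem
      have hnbr : ∀ u : V, u ≠ y → ∀ w, T.Adj u w → w ∈ s := by
        intro u hu w hw
        rw [hsmem]
        rintro rfl
        exact hu (honly u hw.symm)
      have hcards : Fintype.card ↥s = n - 1 := by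
        rw [Fintype.card_subtype]
        have hfe : Finset.univ.filter (· ∈ s) = Finset.univ.erase x := by
          ext z
          simp [hsmem, Finset.mem_erase]
        rw [hfe, Finset.card_erase_of_mem (Finset.mem_univ x), Finset.card_univ, hcard]
      have htree' : (T.induce s).IsTree := by
        apply induce_isTree hT s y hys
        intro c hc
        obtain ⟨P, hP, _⟩ := hT.existsUnique_path c y
        refine ⟨P, fun z hz => ?_⟩
        rw [hsmem]
        rintro rfl
        have hzc : z ≠ c := by
          rintro rfl
          exact ((hsmem z).1 hc) rfl
        have hzy : z ≠ y := hyx.symm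
        obtain ⟨c', d', hcd, hc', hd', _, _⟩ := interior_exists_two P hP z hz hzc hzy
        rw [honly c' hc', honly d' hd'] at hcd
        exact hcd rfl
      have hdeg' : ∀ u : ↥s,
          ⌈ρ * (((T.induce s).degree u : ℕ) : ℝ)⌉₊ = ⌈ρ * (T.degree ↑u : ℝ)⌉₊ := by
        intro u
        by_cases huy : (u : V) = y
        · have h1y : 1 ≤ T.degree y := by
            have : 0 < T.degree y := (T.degree_pos_iff_exists_adj y).2 ⟨x, hxy.symm⟩
            omega
          have hdegy : (T.induce s).degree u = T.degree y - 1 := by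
            rw [degree_induce]
            have hfe : Finset.univ.filter (fun w => w ∈ s ∧ T.Adj ↑u w)
                = (T.neighborFinset y).erase x := by
              ext z
              simp [hsmem, Finset.mem_erase, SimpleGraph.mem_neighborFinset, huy, and_comm]
            rw [hfe, Finset.card_erase_of_mem (by
              rw [SimpleGraph.mem_neighborFinset]
              exact hxy.symm),
              SimpleGraph.card_neighborFinset_eq_degree]
          rw [hdegy, huy]
          have hcast : (((T.degree y - 1 : ℕ)) : ℝ) = (T.degree y : ℝ) - 1 := by
            push_cast [Nat.cast_sub h1y]
            ring
          rw [hcast, hceq]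
        · have hdeq : (T.induce s).degree u = T.degree ↑u := by
            rw [degree_induce, ← SimpleGraph.card_neighborFinset_eq_degree,
              SimpleGraph.neighborFinset_eq_filter]
            congr 1
            ext z
            simp only [Finset.mem_filter, Finset.mem_univ, true_and]
            exact ⟨fun h => h.2, fun h => ⟨hnbr ↑u huy z h, h⟩⟩
          rw [hdeq]
      have hn1R : (1:ℝ)/ρ ≤ ((n-1 : ℕ) : ℝ) := by
        have hc1 : ((n-1:ℕ):ℝ) = (n:ℝ) - 1 := by
          rw [Nat.cast_sub hn0]
          norm_num
        rw [hc1]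
        have hinv : (1:ℝ) ≤ 1/ρ := by
          rw [le_div_iff₀ hρ0]
          linarith
        have h2ρ : (2:ℝ)/ρ < (n:ℝ) := by
          rw [div_lt_iff₀ hρ0]
          linarith
        have hsplit : (2:ℝ)/ρ = 1/ρ + 1/ρ := by ring
        linarith
      obtain ⟨D', hD'univ, hD'card⟩ :=
        IH (n-1) (by omega) ↥s (T.induce s) htree' hcards hn1R
      refine ⟨D'.image Subtype.val, hcl_univ_of ?_, ?_⟩
      · intro S hDS hS
        have hD'S : D' ⊆ S.subtype (· ∈ s) := by
          intro c hcD
          exact Finset.mem_subtype.2 (hDS (Finset.mem_image_of_mem _ hcD))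
        have hSclosed : IsClosedSet (T.induce s)
            (fun u => ⌈ρ * (((T.induce s).degree u : ℕ) : ℝ)⌉₊) (S.subtype (· ∈ s)) := by
          intro u huS
          have huS' : (u : V) ∉ S := fun h => huS (Finset.mem_subtype.2 h)
          have hcnt := hS ↑u huS'
          show (Finset.filter (fun w => (T.induce s).Adj u w) (S.subtype (· ∈ s))).card
            < ⌈ρ * (((T.induce s).degree u : ℕ) : ℝ)⌉₊
          have heq : (Finset.filter (fun w => (T.induce s).Adj u w) (S.subtype (· ∈ s))).card
              = (S.filter (fun w => w ∈ s ∧ T.Adj ↑u w)).card :=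
            card_filter_subtype s S (fun w => T.Adj ↑u w)
          rw [heq, hdeg' u]
          calc (S.filter (fun w => w ∈ s ∧ T.Adj ↑u w)).card
              ≤ (S.filter (fun w => T.Adj ↑u w)).card := by
                apply Finset.card_le_card
                intro z hz
                rw [Finset.mem_filter] at hz ⊢
                exact ⟨hz.1, hz.2.2⟩
          _ < ⌈ρ * (T.degree ↑u : ℝ)⌉₊ := hcnt
        have hSuniv := closed_eq_univ_of_hcl hD'univ hD'S hSclosed
        have hsub : ∀ z, z ∈ s → z ∈ S := by
          intro z hz
          have : (⟨z, hz⟩ : ↥s) ∈ S.subtype (· ∈ s) := hSuniv ▸ Finset.mem_univ _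
          exact Finset.mem_subtype.1 this
        have hxS : x ∈ S := by
          by_contra hx
          have hcnt : (S.filter (fun w => T.Adj x w)).card < ⌈ρ * (T.degree x : ℝ)⌉₊ := hS x hx
          have hy' : y ∈ S.filter (fun w => T.Adj x w) :=
            Finset.mem_filter.2 ⟨hsub y hys, hxy⟩
          have hc1 : 1 ≤ (S.filter (fun w => T.Adj x w)).card := Finset.card_pos.2 ⟨y, hy'⟩
          have hc2 : ⌈ρ * (T.degree x : ℝ)⌉₊ ≤ 1 := by
            rw [hdx]
            exact Nat.ceil_le.2 (by push_cast; linarith)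
          omega
        apply Finset.eq_univ_of_forall
        intro z
        by_cases hzx : z = x
        · exact hzx ▸ hxS
        · exact hsub z ((hsmem z).2 hzx)
      · rw [Finset.card_image_of_injective _ Subtype.val_injective]
        have hc1 : ((n-1:ℕ):ℝ) = (n:ℝ) - 1 := by
          rw [Nat.cast_sub hn0]
          norm_num
        calc ((D'.card : ℕ) : ℝ) ≤ ρ * ((n-1:ℕ):ℝ) := hD'card
        _ ≤ ρ * (n : ℝ) := by rw [hc1]; nlinarith
    · -- pendant-star case
      have h3c : 3 ≤ Fintype.card V := by omega
      obtain ⟨v, p, hvp, hdv2, hleaves⟩ := exists_pendant hT h3c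
      have hvNp : p ∈ T.neighborFinset v := by
        rw [SimpleGraph.mem_neighborFinset]
        exact hvp
      set L : Finset V := (T.neighborFinset v).erase p with hLdef
      have hpL : p ∉ L := Finset.notMem_erase p _
      have hLadj : ∀ w ∈ L, T.Adj v w ∧ w ≠ p := by
        intro w hw
        rw [hLdef, Finset.mem_erase, SimpleGraph.mem_neighborFinset] at hw
        exact ⟨hw.2, hw.1⟩
      have hvL : v ∉ L := fun h => T.irrefl ((hLadj v h).1)
      have hNv : T.neighborFinset v = insert p L := by
        rw [hLdef, Finset.insert_erase hvNp]
      have hLcard : L.card = T.degree v - 1 := by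
        rw [hLdef, Finset.card_erase_of_mem hvNp, SimpleGraph.card_neighborFinset_eq_degree]
      have hLne : L.Nonempty := Finset.card_pos.mp (by omega)
      obtain ⟨x, hxL⟩ := hLne
      have hxv : T.Adj v x := (hLadj x hxL).1
      have hxp : x ≠ p := (hLadj x hxL).2
      have hdx : T.degree x = 1 := hleaves x hxv hxp
      have hceq_ne : ⌈ρ * ((T.degree v : ℝ) - 1)⌉₊ ≠ ⌈ρ * (T.degree v : ℝ)⌉₊ :=
        fun h => hfree ⟨x, v, hxv.symm, hdx, h⟩
      have hdv2R : (2:ℝ) ≤ (T.degree v : ℝ) := by exact_mod_cast hdv2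
      have hφv2 : 1 < ⌈ρ * (T.degree v : ℝ)⌉₊ := by
        by_contra hle
        push_neg at hle
        apply hceq_ne
        have hpos1 : 0 < ⌈ρ * (T.degree v : ℝ)⌉₊ := Nat.ceil_pos.2 (by nlinarith)
        have hpos2 : 0 < ⌈ρ * ((T.degree v : ℝ) - 1)⌉₊ := Nat.ceil_pos.2 (by nlinarith)
        have hle2 : ⌈ρ * ((T.degree v : ℝ) - 1)⌉₊ ≤ ⌈ρ * (T.degree v : ℝ)⌉₊ :=
          Nat.ceil_le_ceil (by nlinarith)
        omega
      have hρdv : 1 < ρ * (T.degree v : ℝ) := hhard v hφv2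
      have hLonly : ∀ w ∈ L, ∀ z, T.Adj w z → z = v := by
        intro w hw z hz
        have hdw : T.degree w = 1 := hleaves w (hLadj w hw).1 (hLadj w hw).2
        have hNw : T.neighborFinset w = {v} := by
          symm
          apply Finset.eq_of_subset_of_card_le
          · intro t ht
            rw [Finset.mem_singleton] at ht
            rw [SimpleGraph.mem_neighborFinset, ht]
            exact (hLadj w hw).1.symm
          · rw [SimpleGraph.card_neighborFinset_eq_degree, hdw, Finset.card_singleton]
        have : z ∈ T.neighborFinset w := by
          rw [SimpleGraph.mem_neighborFinset]
          exact hz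
        rw [hNw, Finset.mem_singleton] at this
        exact this
      obtain ⟨s, hsmem⟩ : ∃ s : Set V, ∀ z, z ∈ s ↔ (z ≠ v ∧ z ∉ L) :=
        ⟨{z | z ≠ v ∧ z ∉ L}, fun z => Iff.rfl⟩
      have hps : p ∈ s := (hsmem p).2 ⟨hvp.ne', hpL⟩
      have hnbr : ∀ u : V, u ∈ s → u ≠ p → ∀ w, T.Adj u w → w ∈ s := by
        intro u hus hup w hw
        rw [hsmem]
        constructor
        · rintro rfl
          have : u ∈ insert p L := by
            rw [← hNv, SimpleGraph.mem_neighborFinset]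
            exact hw.symm
          rcases Finset.mem_insert.1 this with h | h
          · exact hup h
          · exact ((hsmem u).1 hus).2 h
        · intro hwL
          exact ((hsmem u).1 hus).1 (hLonly w hwL u hw.symm)
      have hnbrp : ∀ w, T.Adj p w → w ∈ s ∨ w = v := by
        intro w hw
        by_cases hwv : w = v
        · exact Or.inr hwv
        · refine Or.inl ((hsmem w).2 ⟨hwv, fun hwL => ?_⟩)
          exact hvp.ne' (hLonly w hwL p hw.symm)
      have hWn : T.degree v ≤ n := by
        rw [← hcard]
        exact le_of_lt (T.degree_lt_card_verts v)
      have hcards : Fintype.card ↥s = n - T.degree v := by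
        rw [Fintype.card_subtype]
        have hfe : Finset.univ.filter (· ∈ s) = Finset.univ \ insert v L := by
          ext z
          simp [hsmem, Finset.mem_sdiff, Finset.mem_insert, not_or]
        rw [hfe, Finset.card_sdiff_of_subset (Finset.subset_univ _), Finset.card_univ, hcard,
          Finset.card_insert_of_notMem hvL, hLcard]
        omega
      have htree' : (T.induce s).IsTree := by
        apply induce_isTree hT s p hps
        intro c hc
        obtain ⟨P, hP, _⟩ := hT.existsUnique_path c p
        have hLsup : ∀ ℓ ∈ L, ℓ ∉ P.support := by
          intro ℓ hℓL hℓsup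
          have hℓc : ℓ ≠ c := fun h => ((hsmem c).1 hc).2 (h ▸ hℓL)
          have hℓp : ℓ ≠ p := fun h => hpL (h ▸ hℓL)
          obtain ⟨e1, e2, he12, he1, he2, _, _⟩ := interior_exists_two P hP ℓ hℓsup hℓc hℓp
          rw [hLonly ℓ hℓL e1 he1, hLonly ℓ hℓL e2 he2] at he12
          exact he12 rfl
        refine ⟨P, fun z hz => ?_⟩
        by_cases hzc : z = c
        · exact hzc ▸ hc
        by_cases hzp : z = p
        · exact hzp ▸ hps
        rw [hsmem]
        refine ⟨fun hzv => ?_, fun hzL => hLsup z hzL hz⟩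
        obtain ⟨c', d', hcd, hc', hd', hc's, hd's⟩ := interior_exists_two P hP z hz hzc hzp
        rw [hzv] at hc' hd'
        have hc'm : c' ∈ insert p L := by
          rw [← hNv, SimpleGraph.mem_neighborFinset]
          exact hc'
        have hd'm : d' ∈ insert p L := by
          rw [← hNv, SimpleGraph.mem_neighborFinset]
          exact hd'
        rcases Finset.mem_insert.1 hc'm with h | h
        · rcases Finset.mem_insert.1 hd'm with h2 | h2
          · exact hcd (h.trans h2.symm)
          · exact hLsup d' h2 hd's
        · exact hLsup c' h hc's
      have hdeg_ne : ∀ u : ↥s, (u : V) ≠ p → (T.induce s).degree u = T.degree ↑u := by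
        intro u hup
        rw [degree_induce, ← SimpleGraph.card_neighborFinset_eq_degree,
          SimpleGraph.neighborFinset_eq_filter]
        congr 1
        ext z
        simp only [Finset.mem_filter, Finset.mem_univ, true_and]
        exact ⟨fun h => h.2, fun h => ⟨hnbr ↑u u.2 hup z h, h⟩⟩
      have hdp1 : 1 ≤ T.degree p := by
        have : 0 < T.degree p := (T.degree_pos_iff_exists_adj p).2 ⟨v, hvp.symm⟩
        omega
      have hdeg_p : (T.induce s).degree ⟨p, hps⟩ = T.degree p - 1 := by
        rw [degree_induce]
        show (Finset.univ.filter (fun w => w ∈ s ∧ T.Adj p w)).card = _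
        have hfe : Finset.univ.filter (fun w => w ∈ s ∧ T.Adj p w)
            = (T.neighborFinset p).erase v := by
          ext z
          simp only [Finset.mem_filter, Finset.mem_univ, true_and, Finset.mem_erase,
            SimpleGraph.mem_neighborFinset]
          constructor
          · rintro ⟨hzs, hadj⟩
            exact ⟨((hsmem z).1 hzs).1, hadj⟩
          · rintro ⟨hzv, hadj⟩
            rcases hnbrp z hadj with h | h
            · exact ⟨h, hadj⟩
            · exact absurd h hzv
        rw [hfe, Finset.card_erase_of_mem (by
            rw [SimpleGraph.mem_neighborFinset]
            exact hvp.symm),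
          SimpleGraph.card_neighborFinset_eq_degree]
      by_cases hsmall : ((n - T.degree v : ℕ) : ℝ) < 1/ρ
      · refine ⟨{v}, one_seed hconn.preconnected ?_, by simpa using hρn⟩
        intro w hwv
        by_cases hwL : w ∈ L
        · have hdw : T.degree w = 1 := hleaves w (hLadj w hwL).1 (hLadj w hwL).2
          rw [hdw]
          exact Nat.ceil_le.2 (by push_cast; linarith)
        · have hws : w ∈ s := (hsmem w).2 ⟨hwv, hwL⟩
          have hwfil : w ∈ Finset.univ.filter (· ∈ s) :=
            Finset.mem_filter.2 ⟨Finset.mem_univ w, hws⟩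
          have hcf : (Finset.univ.filter (· ∈ s)).card = n - T.degree v := by
            rw [← Fintype.card_subtype]
            exact hcards
          have hsubn : T.neighborFinset w ⊆ insert v ((Finset.univ.filter (· ∈ s)).erase w) := by
            intro z hzmem
            rw [SimpleGraph.mem_neighborFinset] at hzmem
            by_cases hzv : z = v
            · exact Finset.mem_insert.2 (Or.inl hzv)
            · refine Finset.mem_insert.2 (Or.inr ?_)
              rw [Finset.mem_erase]
              refine ⟨hzmem.ne', Finset.mem_filter.2 ⟨Finset.mem_univ z, ?_⟩⟩
              by_cases hwp : w = p
              · rcases hnbrp z (hwp ▸ hzmem) with h | h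
                · exact h
                · exact absurd h hzv
              · exact hnbr w hws hwp z hzmem
          have hdw : T.degree w ≤ n - T.degree v := by
            have hc2 := Finset.card_le_card hsubn
            have hc3 := Finset.card_insert_le v ((Finset.univ.filter (· ∈ s)).erase w)
            have hc4 := Finset.card_erase_of_mem hwfil
            have hc5 : 1 ≤ (Finset.univ.filter (· ∈ s)).card := Finset.card_pos.2 ⟨w, hwfil⟩
            rw [SimpleGraph.card_neighborFinset_eq_degree] at hc2
            omega
          have hdwR : (T.degree w : ℝ) ≤ ((n - T.degree v : ℕ) : ℝ) := by exact_mod_cast hdw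
          apply Nat.ceil_le.2
          push_cast
          have hmul : ((n - T.degree v : ℕ) : ℝ) * ρ < 1 := (lt_div_iff₀ hρ0).1 hsmall
          nlinarith
      · push_neg at hsmall
        obtain ⟨D', hD'univ, hD'card⟩ :=
          IH (n - T.degree v) (by omega) ↥s (T.induce s) htree' hcards hsmall
        refine ⟨insert v (D'.image Subtype.val), hcl_univ_of ?_, ?_⟩
        · intro S hDS hS
          have hvS : v ∈ S := hDS (Finset.mem_insert_self v _)
          have hD'S : D' ⊆ S.subtype (· ∈ s) := by
            intro c hcD
            exact Finset.mem_subtype.2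
              (hDS (Finset.mem_insert.2 (Or.inr (Finset.mem_image_of_mem _ hcD))))
          have hSclosed : IsClosedSet (T.induce s)
              (fun u => ⌈ρ * (((T.induce s).degree u : ℕ) : ℝ)⌉₊) (S.subtype (· ∈ s)) := by
            intro u huS
            have huS' : (u : V) ∉ S := fun h => huS (Finset.mem_subtype.2 h)
            have hcnt : (S.filter (fun w => T.Adj ↑u w)).card
                < ⌈ρ * (T.degree ↑u : ℝ)⌉₊ := hS ↑u huS'
            show (Finset.filter (fun w => (T.induce s).Adj u w) (S.subtype (· ∈ s))).card
              < ⌈ρ * (((T.induce s).degree u : ℕ) : ℝ)⌉₊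
            have heq : (Finset.filter (fun w => (T.induce s).Adj u w) (S.subtype (· ∈ s))).card
                = (S.filter (fun w => w ∈ s ∧ T.Adj ↑u w)).card :=
              card_filter_subtype s S (fun w => T.Adj ↑u w)
            rw [heq]
            by_cases hup : (u : V) = p
            · have hfe2 : S.filter (fun w => w ∈ s ∧ T.Adj ↑u w)
                  = (S.filter (fun w => T.Adj ↑u w)).erase v := by
                ext z
                simp only [Finset.mem_filter, Finset.mem_erase]
                constructor
                · rintro ⟨hzS, hzs, hadj⟩
                  exact ⟨((hsmem z).1 hzs).1, hzS, hadj⟩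
                · rintro ⟨hzv, hzS, hadj⟩
                  rw [hup] at hadj
                  rcases hnbrp z hadj with h | h
                  · exact ⟨hzS, h, by rw [hup]; exact hadj⟩
                  · exact absurd h hzv
              have hvmem : v ∈ S.filter (fun w => T.Adj ↑u w) :=
                Finset.mem_filter.2 ⟨hvS, by rw [hup]; exact hvp.symm⟩
              rw [hfe2, Finset.card_erase_of_mem hvmem]
              have hdegu : (T.induce s).degree u = T.degree p - 1 := by
                have huu : u = (⟨p, hps⟩ : ↥s) := Subtype.ext hup
                rw [huu, hdeg_p]
              rw [hdegu]
              have hc1 : 1 ≤ (S.filter (fun w => T.Adj ↑u w)).card :=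
                Finset.card_pos.2 ⟨v, hvmem⟩
              have hcnt2 : (S.filter (fun w => T.Adj ↑u w)).card
                  < ⌈ρ * (T.degree p : ℝ)⌉₊ := by
                rw [← hup]
                exact hcnt
              have hceil := ceil_pred_ge hρ0 hρ1 hdp1
              have hcast : (((T.degree p - 1 : ℕ)) : ℝ) = (T.degree p : ℝ) - 1 := by
                push_cast [Nat.cast_sub hdp1]
                ring
              rw [hcast]
              omega
            · rw [hdeg_ne u hup]
              calc (S.filter (fun w => w ∈ s ∧ T.Adj ↑u w)).card
                  ≤ (S.filter (fun w => T.Adj ↑u w)).card := by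
                    apply Finset.card_le_card
                    intro z hz
                    rw [Finset.mem_filter] at hz ⊢
                    exact ⟨hz.1, hz.2.2⟩
              _ < ⌈ρ * (T.degree ↑u : ℝ)⌉₊ := hcnt
          have hSuniv := closed_eq_univ_of_hcl hD'univ hD'S hSclosed
          have hsub : ∀ z, z ∈ s → z ∈ S := by
            intro z hz
            have : (⟨z, hz⟩ : ↥s) ∈ S.subtype (· ∈ s) := hSuniv ▸ Finset.mem_univ _
            exact Finset.mem_subtype.1 this
          have hLS : ∀ ℓ ∈ L, ℓ ∈ S := by
            intro ℓ hℓL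
            by_contra hℓ
            have hcnt : (S.filter (fun w => T.Adj ℓ w)).card
                < ⌈ρ * (T.degree ℓ : ℝ)⌉₊ := hS ℓ hℓ
            have hvm : v ∈ S.filter (fun w => T.Adj ℓ w) :=
              Finset.mem_filter.2 ⟨hvS, (hLadj ℓ hℓL).1.symm⟩
            have hdℓ : T.degree ℓ = 1 := hleaves ℓ (hLadj ℓ hℓL).1 (hLadj ℓ hℓL).2
            have hle1 : ⌈ρ * (T.degree ℓ : ℝ)⌉₊ ≤ 1 := by
              rw [hdℓ]
              exact Nat.ceil_le.2 (by push_cast; linarith)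
            have := Finset.card_pos.2 ⟨v, hvm⟩
            omega
          apply Finset.eq_univ_of_forall
          intro z
          by_cases hzv : z = v
          · exact hzv ▸ hvS
          by_cases hzL : z ∈ L
          · exact hLS z hzL
          · exact hsub z ((hsmem z).2 ⟨hzv, hzL⟩)
        · have hcv : ((n - T.degree v : ℕ) : ℝ) = (n : ℝ) - (T.degree v : ℝ) := by
            rw [Nat.cast_sub hWn]
          have h1 : (insert v (D'.image Subtype.val)).card ≤ D'.card + 1 := by
            calc (insert v (D'.image Subtype.val)).card
                ≤ (D'.image Subtype.val).card + 1 := Finset.card_insert_le _ _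
            _ = D'.card + 1 := by rw [Finset.card_image_of_injective _ Subtype.val_injective]
          have h2 : ((insert v (D'.image Subtype.val)).card : ℝ) ≤ (D'.card : ℝ) + 1 := by
            exact_mod_cast h1
          calc ((insert v (D'.image Subtype.val)).card : ℝ)
              ≤ (D'.card : ℝ) + 1 := h2
          _ ≤ ρ * ((n - T.degree v : ℕ) : ℝ) + 1 := by linarith [hD'card]
          _ ≤ ρ * (n : ℝ) := by
              rw [hcv]
              nlinarith

theorem stmt6 (ρ : ℝ) (hρ0 : 0 < ρ) (hρ1 : ρ ≤ 1)
    (T : SimpleGraph V) (hT : T.IsTree)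
    (hn : (1 : ℝ) / ρ ≤ Fintype.card V) :
    ∃ D : Finset V,
      Hcl T (fun u => ⌈ρ * (T.degree u : ℝ)⌉₊) D = Finset.univ ∧
      (D.card : ℝ) ≤ ρ * Fintype.card V := by
  exact tree_dynmono ρ hρ0 hρ1 (Fintype.card V) V T hT rfl hn
end

section
/- Let G be a connected graph, ρ ∈ (0,1], D ⊆ V(G), and let u be a vertex with d_G(u) < 1/ρ. If u ∉ H(D) (the φ_ρ-closure of D) and P = u_0 u_1 ⋯ u_ℓ is a shortest path in G from u = u_0 to a vertex u_ℓ with d_G(u_ℓ) ≥ 1/ρ, then u_ℓ ∉ H(D). -/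
open scoped Classical

variable {V : Type*} [Fintype V]

/-- Along a walk whose non-terminal vertices all have `φ x ≤ 1`, being outside a
closed set propagates from the start to the end. -/
lemma walk_not_mem {G : SimpleGraph V} {φ : V → ℕ} {S : Finset V}
    (hS : IsClosedSet G φ S) :
    ∀ {a b : V} (q : G.Walk a b), a ∉ S →
      (∀ x ∈ q.support, x ≠ b → φ x ≤ 1) → b ∉ S := by
  intro a b q
  induction q with
  | nil => intro h _; exact h
  | @cons a c b h q ih =>
    intro ha hdeg
    by_cases hab : a = b
    · exact hab ▸ ha
    · have hφ : φ a ≤ 1 := hdeg a (SimpleGraph.Walk.start_mem_support _) hab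
      have hcard := hS a ha
      have hc0 : (S.filter (fun w => G.Adj a w)).card = 0 := by omega
      have hc : c ∉ S := by
        intro hcS
        have : c ∈ S.filter (fun w => G.Adj a w) := Finset.mem_filter.mpr ⟨hcS, h⟩
        have := Finset.card_pos.mpr ⟨c, this⟩
        omega
      exact ih hc (fun x hx hxb => hdeg x (by simp [SimpleGraph.Walk.support_cons, hx]) hxb)

theorem stmt10 (G : SimpleGraph V) (hG : G.Connected) (ρ : ℝ)
    (hρ0 : 0 < ρ) (hρ1 : ρ ≤ 1)
    (D : Finset V) (u w : V) (hu : (G.degree u : ℝ) < 1 / ρ)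
    (p : G.Walk u w) (hp : p.IsPath) (hw : (1 : ℝ) / ρ ≤ (G.degree w : ℝ))
    (hmin : ∀ (w' : V) (q : G.Walk u w'), (1 : ℝ) / ρ ≤ (G.degree w' : ℝ) →
      p.length ≤ q.length)
    (hnot : u ∉ Hcl G (fun x => ⌈ρ * (G.degree x : ℝ)⌉₊) D) :
    w ∉ Hcl G (fun x => ⌈ρ * (G.degree x : ℝ)⌉₊) D := by
  simp only [Hcl, Finset.mem_filter, Finset.mem_univ, true_and, not_forall] at hnot ⊢
  obtain ⟨S, hD, hcl, huS⟩ := hnot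
  refine ⟨S, hD, hcl, ?_⟩
  refine walk_not_mem hcl p huS ?_
  intro x hx hxw
  -- every non-terminal vertex of the shortest path has degree < 1/ρ
  have hdx : (G.degree x : ℝ) < 1 / ρ := by
    by_contra hge
    push_neg at hge
    have h1 := hmin x (p.takeUntil x hx) hge
    have h2 := SimpleGraph.Walk.take_spec p hx
    have h3 : (p.takeUntil x hx).length + (p.dropUntil x hx).length = p.length := by
      rw [← SimpleGraph.Walk.length_append, h2]
    have h4 : (p.dropUntil x hx).length ≠ 0 := by
      intro h0
      exact hxw ((p.dropUntil x hx).eq_of_length_eq_zero h0)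
    omega
  have : ρ * (G.degree x : ℝ) < 1 := by
    have := (mul_lt_mul_iff_right₀ hρ0).mpr hdx
    rwa [mul_one_div, div_self hρ0.ne'] at this
  exact Nat.ceil_le.mpr (by push_cast; linarith)
end

section
/- Let G be a graph, ρ ∈ (0,1], δ > 0, and let V_1 = {u : d_G(u) < 1/ρ}, V_2 = V(G) \ V_1. Then there exists a set X_0 ⊆ V_2 such that (i) every u ∈ V_2 \ X_0 has at most d_G(u)/(1+δ) neighbors in V_1 \ H(X_0), and (ii) |X_0| ≤ (1+δ)ρ n(G), where H denotes the φ_ρ-closure. -/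
open scoped Classical

variable {V : Type*} [Fintype V]

lemma mem_Hcl_iff (G : SimpleGraph V) (φ : V → ℕ) (D : Finset V) (v : V) :
    v ∈ Hcl G φ D ↔ ∀ S : Finset V, D ⊆ S → IsClosedSet G φ S → v ∈ S := by
  simp [Hcl]

lemma Hcl_mono (G : SimpleGraph V) (φ : V → ℕ) {D D' : Finset V} (h : D ⊆ D') :
    Hcl G φ D ⊆ Hcl G φ D' := by
  intro v hv
  rw [mem_Hcl_iff] at hv ⊢
  intro S hS hSc
  exact hv S (h.trans hS) hSc

lemma mem_Hcl_of_adj (G : SimpleGraph V) (φ : V → ℕ) (D : Finset V) {u v : V}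
    (hu : u ∈ D) (hadj : G.Adj v u) (hφ : φ v = 1) : v ∈ Hcl G φ D := by
  rw [mem_Hcl_iff]
  intro S hDS hSc
  by_contra hvS
  have h := hSc v hvS
  rw [hφ, Nat.lt_one_iff, Finset.card_eq_zero] at h
  have : u ∈ S.filter (fun w => G.Adj v w) := Finset.mem_filter.mpr ⟨hDS hu, hadj⟩
  simp [h] at this

theorem stmt11 (G : SimpleGraph V) (ρ : ℝ) (hρ0 : 0 < ρ) (hρ1 : ρ ≤ 1)
    (δ : ℝ) (hδ : 0 < δ)
    (V1 V2 : Finset V)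
    (hV1 : V1 = Finset.univ.filter (fun u => (G.degree u : ℝ) < 1 / ρ))
    (hV2 : V2 = Finset.univ \ V1) :
    ∃ X0 : Finset V, X0 ⊆ V2 ∧
      (∀ u ∈ V2 \ X0,
        (((G.neighborFinset u) ∩
            (V1 \ Hcl G (fun x => ⌈ρ * (G.degree x : ℝ)⌉₊) X0)).card : ℝ)
          ≤ (G.degree u : ℝ) / (1 + δ)) ∧
      (X0.card : ℝ) ≤ (1 + δ) * ρ * Fintype.card V := by
  set φ : V → ℕ := fun x => ⌈ρ * (G.degree x : ℝ)⌉₊ with hφdef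
  have hρδ : 0 < (1 + δ) * ρ := by positivity
  have key : ∀ k : ℕ, ∀ X : Finset V, X ⊆ V2 → (V2 \ X).card ≤ k →
      (X.card : ℝ) ≤ (1 + δ) * ρ * ((V1 ∩ Hcl G φ X).card) →
      ∃ X0 : Finset V, X0 ⊆ V2 ∧
        (∀ u ∈ V2 \ X0,
          (((G.neighborFinset u) ∩ (V1 \ Hcl G φ X0)).card : ℝ)
            ≤ (G.degree u : ℝ) / (1 + δ)) ∧
        (X0.card : ℝ) ≤ (1 + δ) * ρ * ((V1 ∩ Hcl G φ X0).card) := by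
    intro k
    induction k with
    | zero =>
      intro X hXV2 hcard hbound
      refine ⟨X, hXV2, ?_, hbound⟩
      intro u hu
      have : V2 \ X = ∅ := Finset.card_eq_zero.mp (Nat.le_zero.mp hcard)
      simp [this] at hu
    | succ k ih =>
      intro X hXV2 hcard hbound
      by_cases hgood : ∀ u ∈ V2 \ X,
          (((G.neighborFinset u) ∩ (V1 \ Hcl G φ X)).card : ℝ)
            ≤ (G.degree u : ℝ) / (1 + δ)
      · exact ⟨X, hXV2, hgood, hbound⟩
      · push_neg at hgood
        obtain ⟨u, hu, hcount⟩ := hgood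
        have hu2 : u ∈ V2 := (Finset.mem_sdiff.mp hu).1
        have huX : u ∉ X := (Finset.mem_sdiff.mp hu).2
        have hd : 1 / ρ ≤ (G.degree u : ℝ) := by
          have : u ∉ V1 := by
            rw [hV2] at hu2; exact (Finset.mem_sdiff.mp hu2).2
          rw [hV1] at this
          simp only [Finset.mem_filter, Finset.mem_univ, true_and, not_lt] at this
          exact this
        set X' : Finset V := insert u X with hX'
        have hXV2' : X' ⊆ V2 := Finset.insert_subset hu2 hXV2
        have hcard' : (V2 \ X').card ≤ k := by
          have h1 : V2 \ X' = (V2 \ X).erase u := by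
            rw [hX', Finset.sdiff_insert]
          rw [h1, Finset.card_erase_of_mem hu]
          omega
        set A : Finset V := V1 ∩ Hcl G φ X with hA
        set B : Finset V := G.neighborFinset u ∩ (V1 \ Hcl G φ X) with hB
        have hdisj : Disjoint A B := by
          rw [Finset.disjoint_left]
          intro v hvA hvB
          have h1 : v ∈ Hcl G φ X := (Finset.mem_inter.mp hvA).2
          have h2 : v ∉ Hcl G φ X :=
            (Finset.mem_sdiff.mp (Finset.mem_inter.mp hvB).2).2
          exact h2 h1
        have hsub : A ∪ B ⊆ V1 ∩ Hcl G φ X' := by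
          intro v hv
          rcases Finset.mem_union.mp hv with hvA | hvB
          · obtain ⟨hv1, hvH⟩ := Finset.mem_inter.mp hvA
            exact Finset.mem_inter.mpr ⟨hv1, Hcl_mono G φ (Finset.subset_insert u X) hvH⟩
          · obtain ⟨hvN, hvS⟩ := Finset.mem_inter.mp hvB
            have hv1 : v ∈ V1 := (Finset.mem_sdiff.mp hvS).1
            have hadj : G.Adj v u := (SimpleGraph.mem_neighborFinset G u v).mp hvN |>.symm
            have hdv : (G.degree v : ℝ) < 1 / ρ := by
              rw [hV1] at hv1
              simpa using (Finset.mem_filter.mp hv1).2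
            have hdvpos : 0 < G.degree v := by
              rw [G.degree_pos_iff_exists_adj]
              exact ⟨u, hadj⟩
            have hφv : φ v = 1 := by
              have hlt : ρ * (G.degree v : ℝ) < 1 := by
                rw [mul_comm]; exact (lt_div_iff₀ hρ0).mp hdv
              have hpos : 0 < ρ * (G.degree v : ℝ) := by positivity
              have h1 : ⌈ρ * (G.degree v : ℝ)⌉₊ ≤ 1 :=
                Nat.ceil_le.mpr (by exact_mod_cast hlt.le)
              have h2 : 1 ≤ ⌈ρ * (G.degree v : ℝ)⌉₊ := Nat.ceil_pos.mpr hpos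
              simp only [hφdef]
              omega
            exact Finset.mem_inter.mpr
              ⟨hv1, mem_Hcl_of_adj G φ X' (Finset.mem_insert_self u X) hadj hφv⟩
        have h1 : (A.card : ℝ) + (B.card : ℝ) ≤ ((V1 ∩ Hcl G φ X').card : ℝ) := by
          have h := Finset.card_le_card hsub
          rw [Finset.card_union_of_disjoint hdisj] at h
          exact_mod_cast h
        have hBlow : 1 ≤ (1 + δ) * ρ * (B.card : ℝ) := by
          have hdu : 1 ≤ ρ * (G.degree u : ℝ) := by
            rw [mul_comm]; exact (div_le_iff₀ hρ0).mp hd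
          have h2 : (G.degree u : ℝ) / (1 + δ) < (B.card : ℝ) := hcount
          have h1δ : (0:ℝ) < 1 + δ := by linarith
          rw [div_lt_iff₀ h1δ] at h2
          nlinarith
        have hfin : ((X'.card : ℕ) : ℝ) ≤ (1 + δ) * ρ * ((V1 ∩ Hcl G φ X').card) := by
          rw [hX', Finset.card_insert_of_notMem huX]
          push_cast
          have h3 : (1 + δ) * ρ * ((A.card : ℝ) + (B.card : ℝ))
              ≤ (1 + δ) * ρ * ((V1 ∩ Hcl G φ X').card) :=
            mul_le_mul_of_nonneg_left h1 hρδ.le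
          have hbound' : (X.card : ℝ) ≤ (1 + δ) * ρ * (A.card : ℝ) := hbound
          nlinarith
        exact ih X' hXV2' hcard' hfin
  obtain ⟨X0, hX0V2, hX0prop, hX0bound⟩ :=
    key (V2 \ ∅).card ∅ (Finset.empty_subset V2) le_rfl (by simp only [Finset.card_empty, Nat.cast_zero]; positivity)
  refine ⟨X0, hX0V2, hX0prop, ?_⟩
  have hle : ((V1 ∩ Hcl G φ X0).card : ℝ) ≤ (Fintype.card V : ℝ) := by
    have := Finset.card_le_univ (V1 ∩ Hcl G φ X0)
    exact_mod_cast this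
  calc (X0.card : ℝ) ≤ (1 + δ) * ρ * ((V1 ∩ Hcl G φ X0).card) := hX0bound
    _ ≤ (1 + δ) * ρ * (Fintype.card V : ℝ) := mul_le_mul_of_nonneg_left hle hρδ.le
end

section
/- Let T be a tree and V_2 a set of at least 2 vertices of T. Then there exists a vertex u ∈ V_2 such that exactly one component of T − u contains a vertex of V_2. -/
open scoped Classical

variable {V : Type*} [Fintype V]

omit [Fintype V] in
lemma reach_induce (T : SimpleGraph V) (u : V) {a b : V} (p : T.Walk a b)
    (hp : u ∉ p.support) (ha : a ∈ {v : V | v ≠ u}) (hb : b ∈ {v : V | v ≠ u}) :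
    (T.induce {v : V | v ≠ u}).Reachable ⟨a, ha⟩ ⟨b, hb⟩ := by
  induction p with
  | nil => exact SimpleGraph.Reachable.refl _
  | @cons x y z h q ih =>
    rw [SimpleGraph.Walk.support_cons] at hp
    have hy : y ∈ {v : V | v ≠ u} := fun hy => hp (by simp [hy.symm, SimpleGraph.Walk.start_mem_support])
    have h1 : (T.induce {v : V | v ≠ u}).Adj ⟨x, ha⟩ ⟨y, hy⟩ := by
      simp [SimpleGraph.comap_adj, h]
    exact h1.reachable.trans (ih (fun hq => hp (List.mem_cons_of_mem _ hq)) hy hb)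

theorem stmt16 (T : SimpleGraph V) (hT : T.IsTree) (V2 : Finset V)
    (h2 : 2 ≤ V2.card) :
    ∃ u ∈ V2, ∃! c : (T.induce {v : V | v ≠ u}).ConnectedComponent,
      ∃ w : {v : V | v ≠ u}, (w : V) ∈ V2 ∧
        (T.induce {v : V | v ≠ u}).connectedComponentMk w = c := by
  have hconn : T.Connected := hT.1
  -- pick r ∈ V2
  have hpos : 0 < V2.card := by omega
  obtain ⟨r, hr⟩ := Finset.card_pos.mp hpos
  -- pick u ∈ V2 maximizing dist from r
  obtain ⟨u, hu, hmax⟩ := V2.exists_max_image (fun v => T.dist r v) ⟨r, hr⟩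
  -- there is some vertex in V2 other than r
  obtain ⟨s, hs, hsr⟩ : ∃ s ∈ V2, s ≠ r := by
    obtain ⟨s, hs, hsr⟩ := Finset.exists_mem_ne (s := V2) (by omega) r
    exact ⟨s, hs, hsr⟩
  have hdpos : 0 < T.dist r u :=
    lt_of_lt_of_le (hconn.pos_dist_of_ne (Ne.symm hsr)) (hmax s hs)
  have hur : r ≠ u := fun h => by rw [← h] at hdpos; simp [SimpleGraph.dist_self] at hdpos
  -- key: for any w ∈ V2 with w ≠ u, there is a walk from w to r avoiding u
  have key : ∀ w ∈ V2, w ≠ u → ∀ (hw : w ∈ {v : V | v ≠ u}),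
      (T.induce {v : V | v ≠ u}).Reachable ⟨w, hw⟩ ⟨r, hur⟩ := by
    intro w hwV2 hwu hw
    obtain ⟨p, hp⟩ := hconn.exists_walk_length_eq_dist r w
    have hup : u ∉ p.support := by
      intro hus
      have h1 : T.dist r u ≤ (p.takeUntil u hus).length := SimpleGraph.dist_le _
      have h2 : T.dist u w ≤ (p.dropUntil u hus).length := SimpleGraph.dist_le _
      have h3 : (p.takeUntil u hus).length + (p.dropUntil u hus).length = p.length := by
        rw [← SimpleGraph.Walk.length_append, p.take_spec hus]
      have h4 : 0 < T.dist u w := hconn.pos_dist_of_ne (Ne.symm hwu)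
      have h5 := hmax w hwV2
      omega
    exact (reach_induce T u p hup (Set.mem_setOf_eq ▸ hur) hw).symm
  refine ⟨u, hu, (T.induce {v : V | v ≠ u}).connectedComponentMk ⟨r, hur⟩,
    ⟨⟨r, hur⟩, hr, rfl⟩, ?_⟩
  rintro c ⟨⟨w, hw⟩, hwV2, rfl⟩
  exact SimpleGraph.ConnectedComponent.sound (key w hwV2 hw hw)
end

section
/- Let ρ ∈ (0,1], let T be a tree, u a vertex of T, K a component of T − u such that u has its unique neighbor v in K, and suppose D is a φ_ρ-dynamic monopoly of K (with thresholds computed from degrees in K). Then H_T({u} ∪ D ∪ (V(T) \ (V(K) ∪ {u}))) ⊇ V(K), using that ⌈ρ d_T(v)⌉ ≤ 1 + ⌈ρ d_K(v)⌉ for every v ∈ V(K). -/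
open scoped Classical

variable {V : Type*} [Fintype V]

theorem stmt17 (ρ : ℝ) (hρ0 : 0 < ρ) (hρ1 : ρ ≤ 1)
    (T : SimpleGraph V) (hT : T.IsTree) (u v : V) (K : Set V)
    (huK : u ∉ K) (hvK : v ∈ K) (huv : T.Adj u v)
    (hKconn : (T.induce K).Connected)
    (hcut : ∀ a ∈ K, ∀ b ∉ K, T.Adj a b → b = u ∧ a = v)
    (D : Finset K)
    (hD : Hcl (T.induce K) (fun w => ⌈ρ * ((T.induce K).degree w : ℝ)⌉₊) D = Finset.univ) :
    ∀ w ∈ K, w ∈ Hcl T (fun x => ⌈ρ * (T.degree x : ℝ)⌉₊)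
      (insert u (D.image Subtype.val) ∪
        Finset.univ.filter (fun x => x ∉ K ∧ x ≠ u)) := by
  intro w hw
  simp only [Hcl, Finset.mem_filter, Finset.mem_univ, true_and]
  intro S hAS hSclosed
  have hu_S : u ∈ S := hAS (by simp)
  set S' : Finset K := Finset.univ.filter (fun x => (x : V) ∈ S) with hS'
  have hDS' : D ⊆ S' := by
    intro x hx
    simp only [hS', Finset.mem_filter, Finset.mem_univ, true_and]
    exact hAS (Finset.mem_union_left _ (Finset.mem_insert_of_mem
      (Finset.mem_image_of_mem _ hx)))
  -- monotonicity of the threshold in the degree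
  have hmono : ∀ m n : ℕ, m ≤ n → ⌈ρ * (m : ℝ)⌉₊ ≤ ⌈ρ * (n : ℝ)⌉₊ := by
    intro m n h
    exact Nat.ceil_le_ceil (mul_le_mul_of_nonneg_left (by exact_mod_cast h) hρ0.le)
  have hclosed' : IsClosedSet (T.induce K)
      (fun w => ⌈ρ * ((T.induce K).degree w : ℝ)⌉₊) S' := by
    intro x hxS'
    have hxS : (x : V) ∉ S := by
      intro h
      exact hxS' (by simp [hS', h])
    have hmain := hSclosed _ hxS
    -- the coe-image of K-neighbors of x inside S' sits inside T-neighbors of ↑x inside S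
    have himg : ((S'.filter (fun w => (T.induce K).Adj x w)).image Subtype.val)
        ⊆ S.filter (fun w => T.Adj (x : V) w) := by
      intro y hy
      simp only [Finset.mem_image, Finset.mem_filter] at hy ⊢
      obtain ⟨z, ⟨hz1, hz2⟩, rfl⟩ := hy
      refine ⟨?_, hz2⟩
      simpa [hS'] using hz1
    have hcard_img : ((S'.filter (fun w => (T.induce K).Adj x w)).image Subtype.val).card
        = (S'.filter (fun w => (T.induce K).Adj x w)).card :=
      Finset.card_image_of_injective _ Subtype.val_injective
    by_cases hxv : (x : V) = v
    · -- case x = v : ↑x has the extra neighbor u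
      have hu_mem : u ∈ S.filter (fun w => T.Adj (x : V) w) := by
        refine Finset.mem_filter.mpr ⟨hu_S, ?_⟩
        rw [hxv]; exact huv.symm
      have hu_not : u ∉ ((S'.filter (fun w => (T.induce K).Adj x w)).image Subtype.val) := by
        intro h
        simp only [Finset.mem_image] at h
        obtain ⟨z, _, hz⟩ := h
        exact huK (hz ▸ z.2)
      -- degree bound : d_T ↑x ≤ d_K x + 1
      have hdeg : T.degree (x : V) ≤ (T.induce K).degree x + 1 := by
        have hsub : T.neighborFinset (x : V) ⊆
            insert u (((T.induce K).neighborFinset x).image Subtype.val) := by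
          intro y hy
          rw [SimpleGraph.mem_neighborFinset] at hy
          by_cases hyK : y ∈ K
          · refine Finset.mem_insert_of_mem ?_
            refine Finset.mem_image.mpr ⟨⟨y, hyK⟩, ?_, rfl⟩
            rw [SimpleGraph.mem_neighborFinset]
            exact hy
          · exact Finset.mem_insert.mpr (Or.inl (hcut _ x.2 y hyK hy).1)
        calc T.degree (x : V) = (T.neighborFinset (x : V)).card := rfl
          _ ≤ (insert u (((T.induce K).neighborFinset x).image Subtype.val)).card :=
              Finset.card_le_card hsub
          _ ≤ (((T.induce K).neighborFinset x).image Subtype.val).card + 1 :=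
              Finset.card_insert_le _ _
          _ ≤ (T.induce K).degree x + 1 := by
              gcongr
              exact le_of_eq (Finset.card_image_of_injective _ Subtype.val_injective)
      -- threshold bound : ⌈ρ d_T⌉ ≤ ⌈ρ d_K⌉ + 1
      have hthr : ⌈ρ * (T.degree (x : V) : ℝ)⌉₊ ≤ ⌈ρ * ((T.induce K).degree x : ℝ)⌉₊ + 1 := by
        calc ⌈ρ * (T.degree (x : V) : ℝ)⌉₊
            ≤ ⌈ρ * (((T.induce K).degree x : ℝ) + 1)⌉₊ := by
              refine Nat.ceil_le_ceil ?_
              refine mul_le_mul_of_nonneg_left ?_ hρ0.le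
              push_cast
              exact_mod_cast hdeg
          _ = ⌈ρ * ((T.induce K).degree x : ℝ) + ρ⌉₊ := by ring_nf
          _ ≤ ⌈ρ * ((T.induce K).degree x : ℝ)⌉₊ + ⌈ρ⌉₊ := Nat.ceil_add_le _ _
          _ ≤ ⌈ρ * ((T.induce K).degree x : ℝ)⌉₊ + 1 := by
              gcongr
              exact Nat.ceil_le.mpr (by simpa using hρ1)
      -- card bound : a + 1 ≤ b
      have hins : insert u ((S'.filter (fun w => (T.induce K).Adj x w)).image Subtype.val)
          ⊆ S.filter (fun w => T.Adj (x : V) w) := by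
        intro y hy
        rcases Finset.mem_insert.mp hy with rfl | hy
        · exact hu_mem
        · exact himg hy
      have hcard : (S'.filter (fun w => (T.induce K).Adj x w)).card + 1
          ≤ (S.filter (fun w => T.Adj (x : V) w)).card := by
        calc (S'.filter (fun w => (T.induce K).Adj x w)).card + 1
            = (insert u ((S'.filter (fun w => (T.induce K).Adj x w)).image Subtype.val)).card := by
              rw [Finset.card_insert_of_notMem hu_not, hcard_img]
          _ ≤ _ := Finset.card_le_card hins
      exact Nat.lt_of_add_lt_add_right (hcard.trans_lt (hmain.trans_le hthr))
    · -- case x ≠ v : all neighbors of ↑x are in K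
      have hdeg : T.degree (x : V) ≤ (T.induce K).degree x := by
        have hsub : T.neighborFinset (x : V) ⊆
            ((T.induce K).neighborFinset x).image Subtype.val := by
          intro y hy
          rw [SimpleGraph.mem_neighborFinset] at hy
          by_cases hyK : y ∈ K
          · refine Finset.mem_image.mpr ⟨⟨y, hyK⟩, ?_, rfl⟩
            rw [SimpleGraph.mem_neighborFinset]
            exact hy
          · exact absurd (hcut _ x.2 y hyK hy).2 hxv
        calc T.degree (x : V) = (T.neighborFinset (x : V)).card := rfl
          _ ≤ (((T.induce K).neighborFinset x).image Subtype.val).card :=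
              Finset.card_le_card hsub
          _ = (T.induce K).degree x :=
              Finset.card_image_of_injective _ Subtype.val_injective
      have hthr := hmono _ _ hdeg
      have hcard : (S'.filter (fun w => (T.induce K).Adj x w)).card
          ≤ (S.filter (fun w => T.Adj (x : V) w)).card := by
        rw [← hcard_img]
        exact Finset.card_le_card himg
      exact hcard.trans_lt (hmain.trans_le hthr)
  -- now use hD
  have hmem : (⟨w, hw⟩ : K) ∈ Hcl (T.induce K)
      (fun w => ⌈ρ * ((T.induce K).degree w : ℝ)⌉₊) D := by
    rw [hD]; exact Finset.mem_univ _
  simp only [Hcl, Finset.mem_filter, Finset.mem_univ, true_and] at hmem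
  have hws := hmem S' hDS' hclosed'
  rw [hS'] at hws
  exact (Finset.mem_filter.mp hws).2
end

section
/- For every tree T and ρ ∈ (0,1], if T has at least two vertices of degree ≥ 1/ρ, then T can be split at some vertex u of degree ≥ 1/ρ into two subtrees K and R = T − V(K) with V(K) ∪ V(R) = V(T), each containing a vertex of degree (in T) at least 1/ρ; in particular n(K) ≥ 1/ρ and n(R) ≥ 1/ρ. -/
open scoped Classical

variable {V : Type*} [Fintype V]

/-!
Take distinct vertices `u`, `v` of degree at least `1/ρ`, let `K` be the component of `v` in
`T - u` and `R` its complement. `K` contains `v` and all its neighbours except possibly `u`.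
Since `T` is acyclic, `u` has at most one neighbour in `K`, so `R` contains `u` and all but at most
one of its neighbours.
-/

open Finset

namespace SimpleGraph

variable {V : Type*} {G : SimpleGraph V} {u v : V}

lemma Walk.reachable_deleteIncidenceSet {a b : V} (p : G.Walk a b) (hu : u ∉ p.support) :
    (G.deleteIncidenceSet u).Reachable a b :=
  ⟨p.transfer _ fun e he => by
    rw [edgeSet_deleteIncidenceSet]
    exact ⟨p.edges_subset_edgeSet he, fun hue => hu (Walk.mem_support_of_mem_edges he hue.2)⟩⟩

lemma notMem_supp_connectedComponentMk_deleteIncidenceSet (h : v ≠ u) :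
    u ∉ ((G.deleteIncidenceSet u).connectedComponentMk v).supp := by
  intro hu
  obtain ⟨p⟩ := ConnectedComponent.exact hu
  cases p with
  | nil => exact h rfl
  | cons hadj _ => exact (deleteIncidenceSet_adj.mp hadj).2.1 rfl

section Component

variable {C : (G.deleteIncidenceSet u).ConnectedComponent}

lemma connected_induce_supp_of_deleteIncidenceSet (hu : u ∉ C.supp) :
    (G.induce C.supp).Connected := by
  rw [← G.induce_deleteIncidenceSet_of_notMem hu]
  exact C.connected_toSimpleGraph

/-- A path from outside `C` to `u` can not enter `C`: its part before a vertex of `C`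
would avoid `u` and so stay inside `C`. -/
lemma connected_induce_compl_supp_of_deleteIncidenceSet (hG : G.Connected) (hu : u ∉ C.supp) :
    (G.induce C.suppᶜ).Connected := by
  refine induce_connected_of_patches u hu fun {w} hw => ?_
  let p := (hG.preconnected w u).some.toPath
  have hsupp : {x | x ∈ p.1.support} ⊆ C.suppᶜ := fun x hx hxC => hw <| by
    have hxu : u ≠ x := fun h => hu (h ▸ hxC)
    have hwx := (p.1.takeUntil x hx).reachable_deleteIncidenceSet
      (Walk.endpoint_notMem_support_takeUntil p.2 hx hxu)
    exact (ConnectedComponent.sound hwx).trans hxC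
  exact ⟨_, hsupp, p.1.end_mem_support, p.1.start_mem_support,
    p.1.connected_induce_support.preconnected _ _⟩

/-- Otherwise the edge `ub` and a path from `b` to `a` in `G - u` would reconnect the ends of
the bridge `ua`. -/
lemma IsAcyclic.eq_of_adj_of_mem_supp (hG : G.IsAcyclic) {a b : V} (ha : G.Adj u a)
    (hb : G.Adj u b) (haC : a ∈ C.supp) (hbC : b ∈ C.supp) : a = b := by
  by_contra hab
  apply isBridge_iff.mp (isAcyclic_iff_forall_adj_isBridge.mp hG ha)
  have hba : (G.deleteIncidenceSet u).Reachable b a :=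
    ConnectedComponent.exact (hbC.trans haC.symm)
  have hsub : {s(u, a)} ⊆ G.incidenceSet u :=
    Set.singleton_subset_iff.mpr ⟨ha, Sym2.mem_mk_left _ _⟩
  have hub : (G.deleteEdges {s(u, a)}).Adj u b := by simp [hb, Ne.symm hab, hb.ne']
  exact hub.reachable.trans (hba.mono (deleteEdges_anti hsub))

lemma degree_le_card_supp_of_deleteIncidenceSet [Fintype V] (hu : u ∉ C.supp)
    (hv : v ∈ C.supp) : G.degree v ≤ #C.supp.toFinset := by
  have hsub : insert v ((G.neighborFinset v).erase u) ⊆ C.supp.toFinset := by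
    simp only [insert_subset_iff, Set.mem_toFinset, hv, true_and]
    intro w hw
    rw [mem_erase, mem_neighborFinset] at hw
    have hvw : (G.deleteIncidenceSet u).Adj v w :=
      deleteIncidenceSet_adj.mpr ⟨hw.2, fun h => hu (h ▸ hv), hw.1⟩
    exact Set.mem_toFinset.mpr ((C.mem_supp_congr_adj hvw).mp hv)
  calc G.degree v ≤ #((G.neighborFinset v).erase u) + 1 := by
        have := pred_card_le_card_erase (s := G.neighborFinset v) (a := u)
        rw [card_neighborFinset_eq_degree] at this
        omega
    _ = #(insert v ((G.neighborFinset v).erase u)) := by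
        rw [card_insert_of_notMem (by simp)]
    _ ≤ #C.supp.toFinset := card_le_card hsub

lemma IsAcyclic.degree_le_card_compl_supp (hG : G.IsAcyclic) [Fintype V] (hu : u ∉ C.supp) :
    G.degree u ≤ #C.supp.toFinsetᶜ := by
  have hone : #(G.neighborFinset u ∩ C.supp.toFinset) ≤ 1 := card_le_one.mpr fun a ha b hb => by
    simp only [mem_inter, mem_neighborFinset, Set.mem_toFinset] at ha hb
    exact hG.eq_of_adj_of_mem_supp ha.1 hb.1 ha.2 hb.2
  have hsub : insert u (G.neighborFinset u \ C.supp.toFinset) ⊆ C.supp.toFinsetᶜ := by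
    intro x hx
    rw [mem_compl]
    rcases mem_insert.mp hx with rfl | hx
    · simpa using hu
    · exact (mem_sdiff.mp hx).2
  calc G.degree u ≤ #(G.neighborFinset u \ C.supp.toFinset) + 1 := by
        have := card_le_card_sdiff_add_card (s := G.neighborFinset u)
          (t := G.neighborFinset u ∩ C.supp.toFinset)
        rw [sdiff_inter_self_left, card_neighborFinset_eq_degree] at this
        omega
    _ = #(insert u (G.neighborFinset u \ C.supp.toFinset)) := by
        rw [card_insert_of_notMem (by simp)]
    _ ≤ #C.supp.toFinsetᶜ := card_le_card hsub

end Component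

end SimpleGraph

open SimpleGraph in
theorem stmt18_general (ρ : ℝ)
    (T : SimpleGraph V) (hT : T.IsTree)
    (h2 : 2 ≤ (Finset.univ.filter (fun u => (1 : ℝ) / ρ ≤ (T.degree u : ℝ))).card) :
    ∃ (u : V) (K R : Finset V), (1 : ℝ) / ρ ≤ (T.degree u : ℝ) ∧
      K ∪ R = Finset.univ ∧ Disjoint K R ∧ u ∈ R ∧
      (∃ a ∈ K, (1 : ℝ) / ρ ≤ (T.degree a : ℝ)) ∧
      (∃ b ∈ R, (1 : ℝ) / ρ ≤ (T.degree b : ℝ)) ∧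
      (T.induce (K : Set V)).Connected ∧ (T.induce (R : Set V)).Connected ∧
      (1 : ℝ) / ρ ≤ K.card ∧ (1 : ℝ) / ρ ≤ R.card := by
  obtain ⟨u, hu, v, hv, huv⟩ := one_lt_card.mp h2
  simp only [mem_filter, mem_univ, true_and] at hu hv
  set C := (T.deleteIncidenceSet u).connectedComponentMk v
  have huC : u ∉ C.supp := notMem_supp_connectedComponentMk_deleteIncidenceSet huv.symm
  have hvC : v ∈ C.supp := rfl
  refine ⟨u, C.supp.toFinset, C.supp.toFinsetᶜ, hu, union_compl _, disjoint_compl_right,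
    by simpa using huC, ⟨v, by simpa using hvC, hv⟩, ⟨u, by simpa using huC, hu⟩, ?_, ?_,
    hv.trans ?_, hu.trans ?_⟩
  · rw [Set.coe_toFinset]
    exact connected_induce_supp_of_deleteIncidenceSet huC
  · rw [coe_compl, Set.coe_toFinset]
    exact connected_induce_compl_supp_of_deleteIncidenceSet hT.connected huC
  · exact_mod_cast degree_le_card_supp_of_deleteIncidenceSet huC hvC
  · exact_mod_cast hT.isAcyclic.degree_le_card_compl_supp huC

theorem stmt18 (ρ : ℝ) (hρ0 : 0 < ρ) (hρ1 : ρ ≤ 1)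
    (T : SimpleGraph V) (hT : T.IsTree)
    (h2 : 2 ≤ (Finset.univ.filter (fun u => (1 : ℝ) / ρ ≤ (T.degree u : ℝ))).card) :
    ∃ (u : V) (K R : Finset V), (1 : ℝ) / ρ ≤ (T.degree u : ℝ) ∧
      K ∪ R = Finset.univ ∧ Disjoint K R ∧ u ∈ R ∧
      (∃ a ∈ K, (1 : ℝ) / ρ ≤ (T.degree a : ℝ)) ∧
      (∃ b ∈ R, (1 : ℝ) / ρ ≤ (T.degree b : ℝ)) ∧
      (T.induce (K : Set V)).Connected ∧ (T.induce (R : Set V)).Connected ∧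
      (1 : ℝ) / ρ ≤ K.card ∧ (1 : ℝ) / ρ ≤ R.card :=
  stmt18_general ρ T hT h2
end

section
/- For every ε > 0 there exists ρ(ε) > 0 such that for every ρ ∈ (0, ρ(ε)) and every connected graph G of girth at least 5 and maximum degree at least 1/ρ, there is a φ_ρ-dynamic monopoly of G of size at most (2+ε)ρ·n(G). -/
open scoped Classical

variable {V : Type*} [Fintype V]

/-!
Call `u` high when `φ u ≥ 2`. A low vertex becomes active as soon as one neighbour is, so on a
connected graph it suffices to activate the high vertices. Order `V` by a uniformly random
bijection `π`, and seed a high vertex `u` unless at least `φ u` of its vouchers come before it,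
a voucher of a neighbour `x` of `u` being `x` itself if `x` is high, and otherwise a high
neighbour `w ≠ u` of `x`. Activating the high vertices in the order `π` then succeeds.

Girth at least 5 makes the vouchers of distinct neighbours distinct, so `u` is equally likely to
hold each of the `k + 1` positions among itself and its `k` vouchers, and it is seeded with
probability at most `φ u / (k + 1) ≤ ρ (2 + p u)`, where `p u` counts the private neighbours
(the neighbours without a voucher). Private neighbourhoods are disjoint and contain no high
vertex, so the expected number of seeds is at most `2 ρ n`. Without high vertices a single seed
suffices, and `ρ n > ρ Δ ≥ 1`.
-/

open Finset SimpleGraph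

namespace SimpleGraph

omit [Fintype V] in
theorem not_adj_of_adj_of_adj_of_five_le_girth {G : SimpleGraph V} (hG : 5 ≤ G.girth)
    {a b c : V} (hab : G.Adj a b) (hbc : G.Adj b c) : ¬G.Adj c a := by
  intro hca
  have hcyc : (Walk.cons hab (Walk.cons hbc (Walk.cons hca Walk.nil))).IsCycle := by
    rw [Walk.isCycle_def, Walk.isTrail_def]
    have := hab.ne; have := hbc.ne; have := hca.ne
    refine ⟨?_, by simp, ?_⟩ <;> simp <;> aesop
  have := hG.trans (girth_le_length hcyc)
  simp at this

omit [Fintype V] in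
theorem eq_of_adj_of_adj_of_five_le_girth {G : SimpleGraph V} (hG : 5 ≤ G.girth)
    {a b c d : V} (hab : G.Adj a b) (hbc : G.Adj b c) (had : G.Adj a d) (hdc : G.Adj d c)
    (hac : a ≠ c) : b = d := by
  by_contra hbd
  have hcyc : (Walk.cons hab (Walk.cons hbc (Walk.cons hdc.symm
      (Walk.cons had.symm Walk.nil)))).IsCycle := by
    rw [Walk.isCycle_def, Walk.isTrail_def]
    have := hab.ne; have := hbc.ne; have := hdc.ne; have := had.ne
    refine ⟨?_, by simp, ?_⟩ <;> simp <;> aesop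
  have := hG.trans (girth_le_length hcyc)
  simp at this

end SimpleGraph

section Closure

variable {G : SimpleGraph V} {φ : V → ℕ} {S D : Finset V}

def high (φ : V → ℕ) : Finset V := {u | 2 ≤ φ u}

omit [Fintype V] in
theorem IsClosedSet.mem_of_le_card (hS : IsClosedSet G φ S) {u : V} {T : Finset V}
    (hTS : T ⊆ S) (hT : ∀ x ∈ T, G.Adj u x) (hφ : φ u ≤ #T) : u ∈ S := by
  by_contra hu
  have : T ⊆ {w ∈ S | G.Adj u w} := fun x hx => mem_filter.2 ⟨hTS hx, hT x hx⟩
  exact (hS u hu).not_ge (hφ.trans (card_le_card this))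

omit [Fintype V] in
theorem IsClosedSet.mem_of_adj (hS : IsClosedSet G φ S) {x s : V} (hx : φ x ≤ 1)
    (hs : s ∈ S) (hxs : G.Adj x s) : x ∈ S :=
  hS.mem_of_le_card (T := {s}) (by simpa) (by simpa) (by simpa)

theorem IsClosedSet.eq_univ (hS : IsClosedSet G φ S) (hG : G.Connected) (hne : S.Nonempty)
    (hhigh : high φ ⊆ S) : S = univ := by
  have walk_mem : ∀ {a b : V}, G.Walk a b → a ∈ S → b ∈ S := by
    intro a b p
    induction p with
    | nil => exact id
    | @cons a b _ hab _ ih =>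
      refine fun ha => ih ?_
      by_cases hb : 2 ≤ φ b
      · exact hhigh (mem_filter.2 ⟨mem_univ b, hb⟩)
      · exact hS.mem_of_adj (by omega) ha hab.symm
  obtain ⟨s, hs⟩ := hne
  exact eq_univ_of_forall fun v => walk_mem (hG.preconnected s v).some hs

theorem Hcl_eq_univ_of_forall (h : ∀ S, D ⊆ S → IsClosedSet G φ S → S = univ) :
    Hcl G φ D = univ :=
  eq_univ_of_forall fun v => mem_filter.2 ⟨mem_univ v, fun S hDS hS => h S hDS hS ▸ mem_univ v⟩

theorem Hcl_singleton_eq_univ (hG : G.Connected) (hhigh : high φ = ∅) (v : V) :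
    Hcl G φ {v} = univ :=
  Hcl_eq_univ_of_forall fun S hvS hS =>
    hS.eq_univ hG ⟨v, hvS (mem_singleton_self v)⟩ (hhigh ▸ empty_subset S)

end Closure

section RandomOrder

variable {α : Type*} [LinearOrder α]

def numBefore (π : V ≃ α) (A : Finset V) (u : V) : ℕ := #{a ∈ A | π a < π u}

omit [Fintype V] in
theorem card_filter_numBefore_lt_le (π : V ≃ α) (A : Finset V) (t : ℕ) :
    #{a ∈ A | numBefore π A a < t} ≤ t := by
  set B := {a ∈ A | numBefore π A a < t}
  rcases B.eq_empty_or_nonempty with hB | hB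
  · simp [hB]
  obtain ⟨b, hb, hmax⟩ := B.exists_max_image π hB
  have hsub : B ⊆ insert b {a ∈ A | π a < π b} := by
    intro a ha
    rcases eq_or_ne a b with rfl | hab
    · exact mem_insert_self a _
    · exact mem_insert_of_mem (mem_filter.2 ⟨(mem_filter.1 ha).1,
        (hmax a ha).lt_of_ne (π.injective.ne hab)⟩)
  calc #B ≤ numBefore π A b + 1 := (card_le_card hsub).trans (card_insert_le _ _)
    _ ≤ t := (mem_filter.1 hb).2

omit [Fintype V] in
theorem numBefore_trans {A : Finset V} {σ : Equiv.Perm V} (hσ : ∀ a, a ∈ A ↔ σ a ∈ A)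
    (π : V ≃ α) (u : V) : numBefore (σ.trans π) A u = numBefore π A (σ u) :=
  card_equiv σ fun a => by rw [mem_filter, mem_filter, ← hσ]; rfl

variable [Fintype α]

theorem card_numBefore_lt_eq {A : Finset V} {u a : V} (hu : u ∈ A) (ha : a ∈ A) (t : ℕ) :
    #{π : V ≃ α | numBefore π A u < t} = #{π : V ≃ α | numBefore π A a < t} := by
  have hσ : ∀ b, b ∈ A ↔ Equiv.swap u a b ∈ A := fun b => by
    rcases eq_or_ne b u with rfl | hbu
    · simp [hu, ha]
    rcases eq_or_ne b a with rfl | hba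
    · simp [hu, ha]
    · rw [Equiv.swap_apply_of_ne_of_ne hbu hba]
  refine card_nbij' (fun π => (Equiv.swap u a).trans π) (fun π => (Equiv.swap u a).trans π)
    ?_ ?_ ?_ ?_
  · intro π hπ
    simpa [numBefore_trans hσ] using hπ
  · intro π hπ
    simpa [numBefore_trans hσ] using hπ
  all_goals intro π _; ext; simp

theorem card_mul_card_numBefore_lt_le {A : Finset V} {u : V} (hu : u ∈ A) (t : ℕ) :
    #A * #{π : V ≃ α | numBefore π A u < t} ≤ t * Fintype.card (V ≃ α) :=
  calc #A * #{π : V ≃ α | numBefore π A u < t}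
      = ∑ a ∈ A, #{π : V ≃ α | numBefore π A a < t} := by
        rw [sum_congr rfl fun a ha => (card_numBefore_lt_eq hu ha t).symm, sum_const, smul_eq_mul]
    _ = ∑ π : V ≃ α, #{a ∈ A | numBefore π A a < t} :=
        sum_card_bipartiteAbove_eq_sum_card_bipartiteBelow fun a π => numBefore π A a < t
    _ ≤ ∑ _π : V ≃ α, t := sum_le_sum fun π _ => card_filter_numBefore_lt_le π A t
    _ = t * Fintype.card (V ≃ α) := by simp [mul_comm]

end RandomOrder

section Construction

variable (G : SimpleGraph V) (φ : V → ℕ)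

/-- Once `w` is active, so is `x`: either `x = w`, or `x` is a low vertex adjacent to `w`. -/
def Vouches (u x w : V) : Prop := w ∈ high φ ∧ w ≠ u ∧ (w = x ∨ x ∉ high φ ∧ G.Adj w x)

noncomputable def sharedNbrs (u : V) : Finset V := {x ∈ G.neighborFinset u | ∃ w, Vouches G φ u x w}

noncomputable def privateNbrs (u : V) : Finset V :=
  {x ∈ G.neighborFinset u | ¬∃ w, Vouches G φ u x w}

noncomputable def voucher (u x : V) : V := if h : ∃ w, Vouches G φ u x w then h.choose else x

noncomputable def vouchers (u : V) : Finset V := insert u ((sharedNbrs G φ u).image (voucher G φ u))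

noncomputable def monopolyOf {α : Type*} [LinearOrder α] (π : V ≃ α) : Finset V :=
  {u ∈ high φ | numBefore π (vouchers G φ u) u < φ u}

variable {G φ}

@[simp]
theorem mem_sharedNbrs {u x : V} :
    x ∈ sharedNbrs G φ u ↔ G.Adj u x ∧ ∃ w, Vouches G φ u x w := by
  simp [sharedNbrs]

@[simp]
theorem mem_privateNbrs {u x : V} :
    x ∈ privateNbrs G φ u ↔ G.Adj u x ∧ ¬∃ w, Vouches G φ u x w := by
  simp [privateNbrs]

theorem vouches_voucher {u x : V} (hx : x ∈ sharedNbrs G φ u) :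
    Vouches G φ u x (voucher G φ u x) := by
  have h : ∃ w, Vouches G φ u x w := (mem_sharedNbrs.1 hx).2
  rw [voucher, dif_pos h]
  exact h.choose_spec

theorem Vouches.mem {S : Finset V} (hS : IsClosedSet G φ S) {u x w : V}
    (h : Vouches G φ u x w) (hw : w ∈ S) : x ∈ S := by
  obtain ⟨-, -, rfl | ⟨hx, hwx⟩⟩ := h
  · exact hw
  · exact hS.mem_of_adj (by simpa [high] using hx) hw hwx.symm

theorem Vouches.injective (hg : 5 ≤ G.girth) {u x y w : V} (hx : G.Adj u x) (hy : G.Adj u y)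
    (hxw : Vouches G φ u x w) (hyw : Vouches G φ u y w) : x = y := by
  obtain ⟨-, hwu, rfl | ⟨-, hwx⟩⟩ := hxw <;> obtain ⟨-, -, h | ⟨-, hwy⟩⟩ := hyw
  · exact h
  · exact absurd hy.symm (not_adj_of_adj_of_adj_of_five_le_girth hg hx hwy)
  · exact absurd hx.symm (not_adj_of_adj_of_adj_of_five_le_girth hg hy (h ▸ hwx))
  · exact eq_of_adj_of_adj_of_five_le_girth hg hx hwx.symm hy hwy.symm hwu.symm

theorem card_vouchers (hg : 5 ≤ G.girth) (u : V) :
    #(vouchers G φ u) = #(sharedNbrs G φ u) + 1 := by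
  rw [vouchers, card_insert_of_notMem, card_image_of_injOn]
  · exact fun x hx y hy hxy => (vouches_voucher hx).injective hg (mem_sharedNbrs.1 hx).1
      (mem_sharedNbrs.1 hy).1 (hxy ▸ vouches_voucher hy)
  · simp only [mem_image, not_exists, not_and]
    exact fun x hx => (vouches_voucher hx).2.1

theorem card_sharedNbrs_add_card_privateNbrs (u : V) :
    #(sharedNbrs G φ u) + #(privateNbrs G φ u) = G.degree u := by
  rw [sharedNbrs, privateNbrs, card_filter_add_card_filter_not, card_neighborFinset_eq_degree]

theorem card_high_add_sum_card_privateNbrs_le :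
    #(high φ) + ∑ u ∈ high φ, #(privateNbrs G φ u) ≤ Fintype.card V := by
  have hdisj : (high φ : Set V).PairwiseDisjoint (privateNbrs G φ) := by
    intro u _ v hv huv
    refine disjoint_left.2 fun x hxu hxv => ?_
    obtain ⟨hvx, hxv⟩ := mem_privateNbrs.1 hxv
    have hx : x ∉ high φ := fun hx => hxv ⟨x, hx, hvx.ne', .inl rfl⟩
    exact (mem_privateNbrs.1 hxu).2 ⟨v, hv, huv.symm, .inr ⟨hx, hvx⟩⟩
  have hsub : (high φ).biUnion (privateNbrs G φ) ⊆ (high φ)ᶜ := by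
    intro x hx
    obtain ⟨u, -, hxu⟩ := mem_biUnion.1 hx
    obtain ⟨hux, hxu⟩ := mem_privateNbrs.1 hxu
    exact mem_compl.2 fun hx => hxu ⟨x, hx, hux.ne', .inl rfl⟩
  rw [← card_biUnion hdisj, ← card_compl_add_card (high φ), add_comm]
  exact Nat.add_le_add_right (card_le_card hsub) _

theorem high_subset_of_monopolyOf_subset {α : Type*} [LinearOrder α] [WellFoundedLT α]
    (π : V ≃ α) {S : Finset V} (hS : IsClosedSet G φ S) (hDS : monopolyOf G φ π ⊆ S) :
    high φ ⊆ S := by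
  intro u
  induction u using (InvImage.wf π wellFounded_lt).induction with
  | _ u ih =>
  intro hu
  by_cases huD : u ∈ monopolyOf G φ π
  · exact hDS huD
  have hφ : φ u ≤ numBefore π (vouchers G φ u) u := by
    simpa [monopolyOf, hu] using huD
  set E := {x ∈ sharedNbrs G φ u | π (voucher G φ u x) < π u}
  have hE : numBefore π (vouchers G φ u) u ≤ #E := by
    refine (card_le_card (t := E.image (voucher G φ u)) fun w hw => ?_).trans card_image_le
    obtain ⟨hw, hwu⟩ := mem_filter.1 hw
    obtain rfl | ⟨x, hx, rfl⟩ := mem_insert.1 hw |>.imp_right mem_image.1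
    · exact absurd hwu (lt_irrefl _)
    · exact mem_image.2 ⟨x, mem_filter.2 ⟨hx, hwu⟩, rfl⟩
  refine hS.mem_of_le_card (T := E) (fun x hx => ?_) (fun x hx => ?_) (hφ.trans hE)
  · obtain ⟨hx, hlt⟩ := mem_filter.1 hx
    exact (vouches_voucher hx).mem hS (ih _ hlt (vouches_voucher hx).1)
  · exact (mem_sharedNbrs.1 (mem_filter.1 hx).1).1

theorem Hcl_monopolyOf_eq_univ {α : Type*} [LinearOrder α] [WellFoundedLT α] (π : V ≃ α)
    (hG : G.Connected) (hhigh : (high φ).Nonempty) : Hcl G φ (monopolyOf G φ π) = univ :=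
  Hcl_eq_univ_of_forall fun _ hDS hS =>
    have hsub := high_subset_of_monopolyOf_subset π hS hDS
    hS.eq_univ hG (hhigh.mono hsub) hsub

end Construction

theorem le_mul_two_add_of_succ_mul_le {ρ t c N : ℝ} {k p : ℕ} (hρ : 0 < ρ) (hN : 0 ≤ N)
    (hd : 1 < ρ * (k + p)) (ht : t ≤ ρ * (k + p) + 1) (hcN : c ≤ N)
    (hc : (k + 1) * c ≤ t * N) : c ≤ ρ * (2 + p) * N := by
  obtain rfl | hk := k.eq_zero_or_pos
  · simp only [Nat.cast_zero, zero_add] at hd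
    nlinarith
  · have hk : (1 : ℝ) ≤ k := by exact_mod_cast hk
    have htk : t ≤ ρ * (2 + p) * (k + 1) := by
      nlinarith [mul_nonneg (mul_nonneg hρ.le (Nat.cast_nonneg p)) (sub_nonneg.2 hk)]
    have : (k + 1) * c ≤ (k + 1) * (ρ * (2 + p) * N) := by
      nlinarith [mul_le_mul_of_nonneg_right htk hN]
    exact le_of_mul_le_mul_left this (by positivity)

section Threshold

variable {G : SimpleGraph V} {ρ : ℝ} {α : Type*} [LinearOrder α] [Fintype α]

noncomputable def degreeThreshold (G : SimpleGraph V) (ρ : ℝ) (u : V) : ℕ :=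
  ⌈ρ * (G.degree u : ℝ)⌉₊

theorem card_numBefore_vouchers_lt_le (hg : 5 ≤ G.girth) (hρ : 0 < ρ) {u : V}
    (hu : u ∈ high (degreeThreshold G ρ)) :
    (#{π : V ≃ α | numBefore π (vouchers G (degreeThreshold G ρ) u) u < degreeThreshold G ρ u}
      : ℝ) ≤ ρ * (2 + #(privateNbrs G (degreeThreshold G ρ) u)) * Fintype.card (V ≃ α) := by
  set φ := degreeThreshold G ρ
  have hdeg : (#(sharedNbrs G φ u) + #(privateNbrs G φ u) : ℝ) = G.degree u := by
    exact_mod_cast card_sharedNbrs_add_card_privateNbrs u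
  have hd : 1 < ρ * G.degree u := by exact_mod_cast Nat.lt_ceil.1 (mem_filter.1 hu).2
  have ht : (φ u : ℝ) ≤ ρ * G.degree u + 1 := (Nat.ceil_lt_add_one (by positivity)).le
  have hc := card_mul_card_numBefore_lt_le (α := α) (A := vouchers G φ u)
    (mem_insert_self u _) (φ u)
  rw [card_vouchers hg] at hc
  refine le_mul_two_add_of_succ_mul_le hρ (Nat.cast_nonneg _) (hdeg ▸ hd) (hdeg ▸ ht) ?_
    (by exact_mod_cast hc)
  exact_mod_cast card_le_univ _

theorem sum_card_monopolyOf_le (hg : 5 ≤ G.girth) (hρ : 0 < ρ) :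
    ∑ π : V ≃ α, (#(monopolyOf G (degreeThreshold G ρ) π) : ℝ) ≤
      2 * ρ * Fintype.card V * Fintype.card (V ≃ α) := by
  set φ := degreeThreshold G ρ
  set N : ℝ := (Fintype.card (V ≃ α) : ℝ)
  have hcount : ∑ π : V ≃ α, #(monopolyOf G φ π) =
      ∑ u ∈ high φ, #{π : V ≃ α | numBefore π (vouchers G φ u) u < φ u} :=
    sum_card_bipartiteAbove_eq_sum_card_bipartiteBelow
      fun π u => numBefore π (vouchers G φ u) u < φ u
  have hpriv : (#(high φ) : ℝ) + ∑ u ∈ high φ, (#(privateNbrs G φ u) : ℝ) ≤ Fintype.card V := by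
    exact_mod_cast card_high_add_sum_card_privateNbrs_le
  have hhigh : (#(high φ) : ℝ) ≤ Fintype.card V := by exact_mod_cast card_le_univ _
  calc ∑ π : V ≃ α, (#(monopolyOf G φ π) : ℝ)
      = ∑ u ∈ high φ, (#{π : V ≃ α | numBefore π (vouchers G φ u) u < φ u} : ℝ) := by
        exact_mod_cast hcount
    _ ≤ ∑ u ∈ high φ, ρ * (2 + #(privateNbrs G φ u)) * N :=
        sum_le_sum fun u hu => card_numBefore_vouchers_lt_le hg hρ hu
    _ = ρ * N * (2 * #(high φ) + ∑ u ∈ high φ, (#(privateNbrs G φ u) : ℝ)) := by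
        rw [← sum_mul, ← mul_sum, sum_add_distrib, sum_const, nsmul_eq_mul]
        ring
    _ ≤ ρ * N * (2 * Fintype.card V) := by gcongr; linarith
    _ = 2 * ρ * Fintype.card V * N := by ring

theorem exists_card_monopolyOf_le [Nonempty (V ≃ α)] (hg : 5 ≤ G.girth) (hρ : 0 < ρ) :
    ∃ π : V ≃ α, (#(monopolyOf G (degreeThreshold G ρ) π) : ℝ) ≤ 2 * ρ * Fintype.card V := by
  obtain ⟨π, -, hπ⟩ := exists_le_of_sum_le (g := fun _ => 2 * ρ * (Fintype.card V : ℝ))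
    univ_nonempty (by simpa [mul_comm] using sum_card_monopolyOf_le (α := α) hg hρ)
  exact ⟨π, hπ⟩

end Threshold

theorem stmt19 :
    ∀ ε : ℝ, 0 < ε → ∃ ρε : ℝ, 0 < ρε ∧
      ∀ ρ : ℝ, 0 < ρ → ρ < ρε →
        ∀ (W : Type) [Fintype W] (G : SimpleGraph W), G.Connected → 5 ≤ G.girth →
          (1 : ℝ) / ρ ≤ (G.maxDegree : ℝ) →
          ∃ D : Finset W,
            Hcl G (fun u => ⌈ρ * (G.degree u : ℝ)⌉₊) D = Finset.univ ∧
            (D.card : ℝ) ≤ (2 + ε) * ρ * Fintype.card W := by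
  intro ε hε
  refine ⟨1, one_pos, fun ρ hρ _ W _ G hG hg hΔ => ?_⟩
  show ∃ D, Hcl G (degreeThreshold G ρ) D = univ ∧ _
  have : Nonempty W := hG.nonempty
  by_cases hhigh : (high (degreeThreshold G ρ)).Nonempty
  · have : Nonempty (W ≃ Fin (Fintype.card W)) := ⟨Fintype.equivFin W⟩
    obtain ⟨π, hπ⟩ := exists_card_monopolyOf_le (α := Fin (Fintype.card W)) hg hρ
    refine ⟨_, Hcl_monopolyOf_eq_univ π hG hhigh, hπ.trans ?_⟩
    gcongr
    linarith
  · obtain ⟨v⟩ := ‹Nonempty W›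
    refine ⟨{v}, Hcl_singleton_eq_univ hG (not_nonempty_iff_eq_empty.1 hhigh) v, ?_⟩
    have hΔρ : 1 ≤ ρ * G.maxDegree := by rwa [div_le_iff₀' hρ] at hΔ
    have hΔn : ρ * G.maxDegree < ρ * Fintype.card W :=
      mul_lt_mul_of_pos_left (by exact_mod_cast G.maxDegree_lt_card_verts) hρ
    rw [card_singleton, Nat.cast_one]
    nlinarith [mul_pos hε (zero_lt_one.trans_le (hΔρ.trans hΔn.le))]
end
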